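/- arXiv:math/0502193 — 7 statements merged into one kernel-verified Lean document; each statement's English description precedes it below -/
import Mathlib

section
/- Let P(x,y) be a complex Laurent polynomial in two variables and let M = max_{|x|=|y|=1} |P(x,y)|. For every complex number t with |t| > M, the logarithmic Mahler measure of t - P equals log|t| minus the real part of the absolutely convergent series Σ_{n≥1} c_n/(n t^n), where c_n is the constant term of the Laurent polynomial P^n. That is, (1/(2π)^2) ∫_0^{2π} ∫_0^{2π} log|t - P(e^{iθ}, e^{iφ})| dθ dφ = log|t| - Re Σ_{n≥1} c_n t^{-n}/n. -/
/-!
For `‖w‖ < ‖t‖` we have `log ‖t - w‖ = log ‖t‖ - Re ∑_{n ≥ 1} (w / t) ^ n / n`. On the torus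
`‖P‖ ≤ M < ‖t‖`, so with `w = P(e^{iθ}, e^{iφ})` the series is dominated by the geometric series
in `M / ‖t‖` and may be integrated termwise. Since `P ↦ P(x, y)` is multiplicative,
`P(e^{iθ}, e^{iφ}) ^ n = P ^ n (e^{iθ}, e^{iφ})`, and integrating a Laurent polynomial over the
torus kills every monomial except the constant one.
-/

/-- Evaluation of a Laurent polynomial in two variables (an element of the group algebra
`ℂ[ℤ × ℤ]`) at a point `(x, y)` with `x, y ≠ 0`. -/
noncomputable def lpEval (P : AddMonoidAlgebra ℂ (ℤ × ℤ)) (x y : ℂ) : ℂ :=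
  ∑ m ∈ P.coeff.support, P.coeff m * x ^ m.1 * y ^ m.2

open Complex Function intervalIntegral
open scoped Real

theorem hasSum_pow_succ_div_succ {z : ℂ} (hz : ‖z‖ < 1) :
    HasSum (fun n : ℕ ↦ z ^ (n + 1) / ((n : ℂ) + 1)) (-log (1 - z)) := by
  simpa using (hasSum_nat_add_iff' 1).mpr (hasSum_taylorSeries_neg_log hz)

theorem re_neg_log_one_sub_div {w t : ℂ} (ht : t ≠ 0) (hwt : w ≠ t) :
    (-log (1 - w / t)).re = Real.log ‖t‖ - Real.log ‖t - w‖ := by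
  rw [neg_re, log_re, one_sub_div ht, norm_div,
    Real.log_div (norm_ne_zero_iff.mpr (sub_ne_zero.mpr hwt.symm)) (norm_ne_zero_iff.mpr ht)]
  ring

theorem norm_pow_succ_div_succ_le (z : ℂ) (n : ℕ) :
    ‖z ^ (n + 1) / ((n : ℂ) + 1)‖ ≤ ‖z‖ ^ (n + 1) := by
  rw [norm_div, norm_pow]
  refine div_le_self (by positivity) ?_
  rw [← Nat.cast_succ, norm_natCast]
  exact_mod_cast n.succ_pos

section IteratedIntegral

variable {E F : Type*} [NormedAddCommGroup E] [NormedSpace ℝ E] {a b c d : ℝ}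

theorem norm_integral_integral_le_of_norm_le_const {f : ℝ → ℝ → E} {C : ℝ}
    (hf : ∀ x y, ‖f x y‖ ≤ C) :
    ‖∫ x in a..b, ∫ y in c..d, f x y‖ ≤ C * |d - c| * |b - a| :=
  norm_integral_le_of_norm_le_const fun x _ ↦
    norm_integral_le_of_norm_le_const fun y _ ↦ hf x y

theorem integral_integral_sub {f g : ℝ → ℝ → E} (hf : Continuous (uncurry f))
    (hg : Continuous (uncurry g)) :
    ∫ x in a..b, ∫ y in c..d, (f x y - g x y) =
      (∫ x in a..b, ∫ y in c..d, f x y) - ∫ x in a..b, ∫ y in c..d, g x y := by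
  have hsub : ∀ x, ∫ y in c..d, (f x y - g x y) = (∫ y in c..d, f x y) - ∫ y in c..d, g x y :=
    fun x ↦ integral_sub ((hf.uncurry_left x).intervalIntegrable _ _)
      ((hg.uncurry_left x).intervalIntegrable _ _)
  simp_rw [hsub]
  exact integral_sub
    ((continuous_parametric_intervalIntegral_of_continuous' hf c d).intervalIntegrable _ _)
    ((continuous_parametric_intervalIntegral_of_continuous' hg c d).intervalIntegrable _ _)

theorem ContinuousLinearMap.integral_integral_comp_comm [CompleteSpace E]
    [NormedAddCommGroup F] [NormedSpace ℝ F] [CompleteSpace F] (L : E →L[ℝ] F)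
    {f : ℝ → ℝ → E} (hf : Continuous (uncurry f)) :
    ∫ x in a..b, ∫ y in c..d, L (f x y) = L (∫ x in a..b, ∫ y in c..d, f x y) := by
  have hinner : ∀ x, ∫ y in c..d, L (f x y) = L (∫ y in c..d, f x y) :=
    fun x ↦ L.intervalIntegral_comp_comm ((hf.uncurry_left x).intervalIntegrable _ _)
  simp_rw [hinner]
  exact L.intervalIntegral_comp_comm
    ((continuous_parametric_intervalIntegral_of_continuous' hf c d).intervalIntegrable _ _)

theorem integral_integral_finsetSum {ι : Type*} {s : Finset ι} {f : ι → ℝ → ℝ → E}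
    (hf : ∀ i ∈ s, Continuous (uncurry (f i))) :
    ∫ x in a..b, ∫ y in c..d, ∑ i ∈ s, f i x y = ∑ i ∈ s, ∫ x in a..b, ∫ y in c..d, f i x y := by
  have hinner : ∀ x, ∫ y in c..d, ∑ i ∈ s, f i x y = ∑ i ∈ s, ∫ y in c..d, f i x y :=
    fun x ↦ integral_finsetSum fun i hi ↦ ((hf i hi).uncurry_left x).intervalIntegrable _ _
  simp_rw [hinner]
  exact integral_finsetSum fun i hi ↦
    (continuous_parametric_intervalIntegral_of_continuous' (hf i hi) c d).intervalIntegrable _ _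

theorem hasSum_integral_integral_of_norm_le {f : ℕ → ℝ → ℝ → E} {g : ℝ → ℝ → E} {u : ℕ → ℝ}
    (hf : ∀ n, Continuous (uncurry (f n))) (hfu : ∀ n x y, ‖f n x y‖ ≤ u n)
    (hu : Summable u) (hfg : ∀ x y, HasSum (fun n ↦ f n x y) (g x y)) :
    HasSum (fun n ↦ ∫ x in a..b, ∫ y in c..d, f n x y) (∫ x in a..b, ∫ y in c..d, g x y) := by
  have hinner : ∀ x, HasSum (fun n ↦ ∫ y in c..d, f n x y) (∫ y in c..d, g x y) := fun x ↦
    hasSum_integral_of_dominated_convergence (fun n _ ↦ u n)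
      (fun n ↦ (hf n).uncurry_left x |>.aestronglyMeasurable)
      (fun n ↦ .of_forall fun y _ ↦ hfu n x y) (.of_forall fun _ _ ↦ hu)
      intervalIntegrable_const (.of_forall fun y _ ↦ hfg x y)
  exact hasSum_integral_of_dominated_convergence (fun n _ ↦ u n * |d - c|)
    (fun n ↦
      (continuous_parametric_intervalIntegral_of_continuous' (hf n) c d).aestronglyMeasurable)
    (fun n ↦ .of_forall fun x _ ↦ norm_integral_le_of_norm_le_const fun y _ ↦ hfu n x y)
    (.of_forall fun _ _ ↦ hu.mul_right _) intervalIntegrable_const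
    (.of_forall fun x _ ↦ hinner x)


theorem hasSum_integral_integral_pow_succ_div_succ {z : ℝ → ℝ → ℂ}
    (hz : Continuous (uncurry z)) {r : ℝ} (hzr : ∀ x y, ‖z x y‖ ≤ r) (hr : r < 1) :
    HasSum (fun n : ℕ ↦ ∫ x in a..b, ∫ y in c..d, z x y ^ (n + 1) / ((n : ℂ) + 1))
      (∫ x in a..b, ∫ y in c..d, -log (1 - z x y)) :=
  hasSum_integral_integral_of_norm_le (fun n ↦ (hz.pow (n + 1)).div_const _)
    (fun n x y ↦ (norm_pow_succ_div_succ_le _ n).trans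
      (pow_le_pow_left₀ (norm_nonneg _) (hzr x y) _))
    ((summable_nat_add_iff 1).mpr
      (summable_geometric_of_lt_one ((norm_nonneg _).trans (hzr 0 0)) hr))
    fun x y ↦ hasSum_pow_succ_div_succ ((hzr x y).trans_lt hr)

theorem integral_integral_div_pow_succ_div_succ (g : ℝ → ℝ → ℂ) (t : ℂ) (n : ℕ) :
    ∫ x in a..b, ∫ y in c..d, (g x y / t) ^ (n + 1) / ((n : ℂ) + 1) =
      (∫ x in a..b, ∫ y in c..d, g x y ^ (n + 1)) * t ^ (-((n : ℤ) + 1)) / ((n : ℂ) + 1) := by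
  have hpow : ∀ w : ℂ, (w / t) ^ (n + 1) / ((n : ℂ) + 1) =
      w ^ (n + 1) * (t ^ (-((n : ℤ) + 1)) / ((n : ℂ) + 1)) := fun w ↦ by
    rw [zpow_neg, ← Nat.cast_succ (R := ℤ), zpow_natCast, div_pow, Nat.succ_eq_add_one]
    ring
  simp_rw [hpow, integral_mul_const, mul_div_assoc]

theorem re_integral_integral_neg_log_one_sub_div {g : ℝ → ℝ → ℂ}
    (hg : Continuous (uncurry g)) {t : ℂ} (hgt : ∀ x y, ‖g x y‖ < ‖t‖) :
    (∫ x in a..b, ∫ y in c..d, -log (1 - g x y / t)).re =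
      (b - a) * (d - c) * Real.log ‖t‖ - ∫ x in a..b, ∫ y in c..d, Real.log ‖t - g x y‖ := by
  have ht : t ≠ 0 := norm_pos_iff.mp ((norm_nonneg _).trans_lt (hgt 0 0))
  have hne : ∀ x y, g x y ≠ t := fun x y hxy ↦ (hgt x y).ne (congrArg norm hxy)
  have hlog : Continuous (uncurry fun x y ↦ -log (1 - g x y / t)) :=
    ((continuous_const.sub (hg.div_const t)).clog fun p ↦ by
      simpa [uncurry, sub_eq_add_neg] using mem_slitPlane_of_norm_lt_one
        (z := -(g p.1 p.2 / t)) (by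
          rw [norm_neg, norm_div, div_lt_one (norm_pos_iff.mpr ht)]; exact hgt p.1 p.2)).neg
  have hlog_norm : Continuous (uncurry fun x y ↦ Real.log ‖t - g x y‖) :=
    (continuous_const.sub hg).norm.log fun p ↦
      norm_ne_zero_iff.mpr (sub_ne_zero.mpr (hne p.1 p.2).symm)
  rw [← reCLM_apply, ← reCLM.integral_integral_comp_comm hlog]
  simp only [reCLM_apply, re_neg_log_one_sub_div ht (hne _ _)]
  rw [integral_integral_sub continuous_const hlog_norm]
  simp only [integral_const, smul_eq_mul]
  ring

end IteratedIntegral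

theorem summable_and_integral_integral_log_norm_sub {g : ℝ → ℝ → ℂ}
    (hg : Continuous (uncurry g)) {M : ℝ} (hgM : ∀ x y, ‖g x y‖ ≤ M) {t : ℂ} (ht : M < ‖t‖)
    {c : ℕ → ℂ} (hc : ∀ n : ℕ, ∫ x in (0:ℝ)..2 * π, ∫ y in (0:ℝ)..2 * π, g x y ^ (n + 1) =
      ((2 * π : ℝ) : ℂ) ^ 2 * c n) :
    Summable (fun n : ℕ ↦ ‖c n * t ^ (-((n : ℤ) + 1)) / ((n : ℂ) + 1)‖) ∧
    (1 / (2 * π) ^ 2) * ∫ x in (0:ℝ)..2 * π, ∫ y in (0:ℝ)..2 * π, Real.log ‖t - g x y‖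
      = Real.log ‖t‖ - (∑' n : ℕ, c n * t ^ (-((n : ℤ) + 1)) / ((n : ℂ) + 1)).re := by
  set a : ℕ → ℂ := fun n ↦ c n * t ^ (-((n : ℤ) + 1)) / ((n : ℂ) + 1)
  set A : ℝ := (2 * π) ^ 2
  have hA : (A : ℂ) ≠ 0 := ofReal_ne_zero.mpr (by positivity)
  have ht0 : t ≠ 0 := norm_pos_iff.mp ((norm_nonneg _).trans_lt ((hgM 0 0).trans_lt ht))
  set r := M / ‖t‖
  have hgr : ∀ x y, ‖g x y / t‖ ≤ r := fun x y ↦ by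
    rw [norm_div]; exact div_le_div_of_nonneg_right (hgM x y) (norm_nonneg _)
  have hr : r < 1 := (div_lt_one (norm_pos_iff.mpr ht0)).mpr ht
  have hterm : ∀ n : ℕ, ∫ x in (0:ℝ)..2 * π, ∫ y in (0:ℝ)..2 * π,
      (g x y / t) ^ (n + 1) / ((n : ℂ) + 1) = A * a n := fun n ↦ by
    rw [integral_integral_div_pow_succ_div_succ, hc]
    simp only [a, A]
    push_cast
    ring
  have ha_le : ∀ n, ‖a n‖ ≤ r ^ (n + 1) := fun n ↦ by
    have := norm_integral_integral_le_of_norm_le_const (a := 0) (b := 2 * π) (c := 0)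
      (d := 2 * π) fun x y ↦ (norm_pow_succ_div_succ_le (g x y / t) n).trans
        (pow_le_pow_left₀ (norm_nonneg _) (hgr x y) _)
    rw [hterm, norm_mul, norm_real, Real.norm_of_nonneg (by positivity)] at this
    simp only [sub_zero, abs_of_pos Real.two_pi_pos] at this
    exact le_of_mul_le_mul_left (this.trans_eq (by simp only [A]; ring)) (by positivity)
  have hsum : HasSum a ((A : ℂ)⁻¹ *
      ∫ x in (0:ℝ)..2 * π, ∫ y in (0:ℝ)..2 * π, -log (1 - g x y / t)) := by
    refine (hasSum_mul_left_iff hA).mp ?_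
    rw [mul_inv_cancel_left₀ hA]
    simpa only [hterm] using hasSum_integral_integral_pow_succ_div_succ (a := 0) (b := 2 * π)
      (c := 0) (d := 2 * π) (z := fun x y ↦ g x y / t) (hg.div_const t) hgr hr
  refine ⟨.of_nonneg_of_le (fun _ ↦ norm_nonneg _) ha_le ((summable_nat_add_iff 1).mpr
    (summable_geometric_of_lt_one ((norm_nonneg _).trans (hgr 0 0)) hr)), ?_⟩
  rw [hsum.tsum_eq, ← ofReal_inv, re_ofReal_mul,
    re_integral_integral_neg_log_one_sub_div hg fun x y ↦ (hgM x y).trans_lt ht]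
  simp only [A, sub_zero]
  field_simp
  ring

theorem continuous_exp_mul_I_zpow (k : ℤ) : Continuous fun θ : ℝ ↦ exp (θ * I) ^ k :=
  (continuous_exp.comp (continuous_ofReal.mul continuous_const)).zpow₀ k
    fun _ ↦ .inl (exp_ne_zero _)

theorem continuous_monomial_exp (a : ℂ) (m : ℤ × ℤ) :
    Continuous (uncurry fun θ φ : ℝ ↦ a * exp (θ * I) ^ m.1 * exp (φ * I) ^ m.2) :=
  (continuous_const.mul ((continuous_exp_mul_I_zpow m.1).comp continuous_fst)).mul
    ((continuous_exp_mul_I_zpow m.2).comp continuous_snd)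

theorem integral_exp_mul_I_zpow (k : ℤ) :
    ∫ θ in (0:ℝ)..2 * π, exp (θ * I) ^ k = if k = 0 then ((2 * π : ℝ) : ℂ) else 0 := by
  split_ifs with hk
  · simp [hk]
  have hexp : ∀ θ : ℝ, exp (θ * I) ^ k = exp (k * I * θ) := fun θ ↦ by
    rw [← exp_int_mul]; ring_nf
  simp_rw [hexp]
  rw [integral_exp_mul_complex (by simp [hk, I_ne_zero])]
  have hperiod : exp (k * I * ((2 * π : ℝ) : ℂ)) = 1 := by
    rw [← exp_int_mul_two_pi_mul_I k]; push_cast; ring_nf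
  push_cast at hperiod
  simp [hperiod]

section LaurentPolynomial

variable (P : AddMonoidAlgebra ℂ (ℤ × ℤ))

theorem lpEval_pow {x y : ℂ} (hx : x ≠ 0) (hy : y ≠ 0) (n : ℕ) :
    lpEval (P ^ n) x y = lpEval P x y ^ n := by
  let ψ : Multiplicative (ℤ × ℤ) →* ℂ :=
    { toFun := fun m ↦ x ^ m.toAdd.1 * y ^ m.toAdd.2
      map_one' := by simp
      map_mul' := fun m m' ↦ by
        simp only [toAdd_mul, Prod.fst_add, Prod.snd_add, zpow_add₀ hx, zpow_add₀ hy]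
        ring }
  have hlift : ∀ Q : AddMonoidAlgebra ℂ (ℤ × ℤ), lpEval Q x y = AddMonoidAlgebra.lift ℂ ℂ _ ψ Q :=
    fun Q ↦ by
      simp only [AddMonoidAlgebra.lift_apply, Finsupp.sum, smul_eq_mul, lpEval]
      exact Finset.sum_congr rfl fun m _ ↦ by simp [ψ, mul_assoc]
  rw [hlift, hlift, map_pow]

theorem norm_lpEval_le_sum_norm_coeff {x y : ℂ} (hx : ‖x‖ = 1) (hy : ‖y‖ = 1) :
    ‖lpEval P x y‖ ≤ ∑ m ∈ P.coeff.support, ‖P.coeff m‖ :=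
  (norm_sum_le _ _).trans_eq <| Finset.sum_congr rfl fun m _ ↦ by
    simp [norm_zpow, hx, hy]

theorem norm_lpEval_exp_le_sSup (θ φ : ℝ) :
    ‖lpEval P (exp (θ * I)) (exp (φ * I))‖ ≤
      sSup {r : ℝ | ∃ x y : ℂ, ‖x‖ = 1 ∧ ‖y‖ = 1 ∧ r = ‖lpEval P x y‖} := by
  refine le_csSup ⟨∑ m ∈ P.coeff.support, ‖P.coeff m‖, ?_⟩
    ⟨_, _, norm_exp_ofReal_mul_I θ, norm_exp_ofReal_mul_I φ, rfl⟩
  rintro r ⟨x, y, hx, hy, rfl⟩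
  exact norm_lpEval_le_sum_norm_coeff P hx hy

theorem continuous_lpEval_exp :
    Continuous (uncurry fun θ φ : ℝ ↦ lpEval P (exp (θ * I)) (exp (φ * I))) :=
  continuous_finsetSum _ fun m _ ↦ continuous_monomial_exp (P.coeff m) m

theorem integral_integral_lpEval :
    ∫ θ in (0:ℝ)..2 * π, ∫ φ in (0:ℝ)..2 * π, lpEval P (exp (θ * I)) (exp (φ * I)) =
      ((2 * π : ℝ) : ℂ) ^ 2 * P.coeff 0 := by
  unfold lpEval
  rw [integral_integral_finsetSum fun m _ ↦ continuous_monomial_exp (P.coeff m) m]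
  simp_rw [mul_assoc, integral_const_mul, integral_mul_const, integral_exp_mul_I_zpow]
  rw [Finset.sum_eq_single 0]
  · simp [sq, mul_comm]
  · intro m _ hm
    have hm' : ¬(m.1 = 0 ∧ m.2 = 0) := fun h ↦ hm (Prod.ext h.1 h.2)
    by_cases h1 : m.1 = 0 <;> simp_all
  · intro h
    simp [Finsupp.notMem_support_iff.mp h]

end LaurentPolynomial

/-- For a two-variable complex Laurent polynomial `P` and `t ∈ ℂ` with
`|t| > M = max_{|x|=|y|=1} |P(x,y)|`, the logarithmic Mahler measure of `t - P` equals
`log|t| - Re Σ_{n≥1} c_n t^{-n}/n`, an absolutely convergent series, where `c_n` is the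
constant term of `P^n`. -/
theorem stmt0 (P : AddMonoidAlgebra ℂ (ℤ × ℤ)) (t : ℂ)
    (ht : sSup {r : ℝ | ∃ x y : ℂ, ‖x‖ = 1 ∧ ‖y‖ = 1 ∧ r = ‖lpEval P x y‖} < ‖t‖) :
    Summable (fun n : ℕ =>
      ‖(P ^ (n + 1)).coeff (0 : ℤ × ℤ) * t ^ (-((n : ℤ) + 1)) / ((n : ℂ) + 1)‖) ∧
    (1 / (2 * Real.pi) ^ 2) *
        ∫ θ in (0:ℝ)..(2 * Real.pi), ∫ φ in (0:ℝ)..(2 * Real.pi),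
          Real.log ‖t - lpEval P (Complex.exp (θ * Complex.I)) (Complex.exp (φ * Complex.I))‖
      = Real.log ‖t‖
        - (∑' n : ℕ, (P ^ (n + 1)).coeff (0 : ℤ × ℤ) * t ^ (-((n : ℤ) + 1)) / ((n : ℂ) + 1)).re := by
  refine summable_and_integral_integral_log_norm_sub (continuous_lpEval_exp P)
    (norm_lpEval_exp_le_sSup P) ht fun n ↦ ?_
  rw [← integral_integral_lpEval]
  simp_rw [lpEval_pow P (exp_ne_zero _) (exp_ne_zero _)]
end

section
/- Let P̃ = X^2 Y + Y^2 Z + Z^2 X ∈ ℤ[X,Y,Z]. For every n ≥ 1, the coefficient c_n of the monomial X^n Y^n Z^n in P̃^n equals (3m)! / (m!)^3 if n = 3m for some integer m, and equals 0 if 3 does not divide n. -/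
open MvPolynomial Finset

/-- The exponent vector of the monomial `X^n Y^n Z^n` in three variables. -/
noncomputable def diagExp (n : ℕ) : Fin 3 →₀ ℕ :=
  Finsupp.single 0 n + Finsupp.single 1 n + Finsupp.single 2 n

noncomputable def dvec : Fin 3 → (Fin 3 →₀ ℕ)
  | 0 => Finsupp.single 0 2 + Finsupp.single 1 1
  | 1 => Finsupp.single 1 2 + Finsupp.single 2 1
  | 2 => Finsupp.single 2 2 + Finsupp.single 0 1

lemma Psum : (X 0 ^ 2 * X 1 + X 1 ^ 2 * X 2 + X 2 ^ 2 * X 0 : MvPolynomial (Fin 3) ℤ)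
    = ∑ i : Fin 3, monomial (dvec i) 1 := by
  rw [Fin.sum_univ_three]
  simp only [dvec, X, monomial_pow, monomial_mul, smul_eq_mul, mul_one, one_mul, one_pow,
    Finsupp.smul_single]

lemma prodmon (k : Fin 3 → ℕ) : (∏ i : Fin 3, (monomial (dvec i) (1:ℤ)) ^ k i)
    = monomial (∑ i : Fin 3, k i • dvec i) 1 := by
  simp only [monomial_pow, one_pow]
  rw [Fin.sum_univ_three, Fin.prod_univ_three, monomial_mul, monomial_mul, mul_one, mul_one]

lemma cond_iff (n : ℕ) (k : Fin 3 → ℕ) (hk : k 0 + k 1 + k 2 = n) :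
    (∑ i : Fin 3, k i • dvec i) = diagExp n ↔ (k = fun _ => n / 3) ∧ 3 ∣ n := by
  rw [Fin.sum_univ_three]
  constructor
  · intro h
    have h0 := DFunLike.congr_fun h 0
    have h1 := DFunLike.congr_fun h 1
    have h2 := DFunLike.congr_fun h 2
    simp [dvec, diagExp, Finsupp.single_apply] at h0 h1 h2
    refine ⟨funext fun i => ?_, by omega⟩
    fin_cases i <;> simp <;> omega
  · rintro ⟨rfl, ⟨m, rfl⟩⟩
    have hm : 3 * m / 3 = m := by omega
    rw [hm] at hk ⊢
    ext j
    fin_cases j <;>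
      simp [dvec, diagExp, Finsupp.single_apply] <;> omega

lemma key (n : ℕ) :
    MvPolynomial.coeff (diagExp n)
      ((X 0 ^ 2 * X 1 + X 1 ^ 2 * X 2 + X 2 ^ 2 * X 0 : MvPolynomial (Fin 3) ℤ) ^ n)
    = if 3 ∣ n then ((n.factorial / ((n / 3).factorial ^ 3) : ℕ) : ℤ) else 0 := by
  rw [Psum, Finset.sum_pow_eq_sum_piAntidiag, MvPolynomial.coeff_sum]
  have hterm : ∀ k ∈ piAntidiag (univ : Finset (Fin 3)) n,
      MvPolynomial.coeff (diagExp n)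
        ((Nat.multinomial univ k : MvPolynomial (Fin 3) ℤ) * ∏ i : Fin 3, (monomial (dvec i) 1) ^ k i)
      = if (k = fun _ => n / 3) ∧ 3 ∣ n then (Nat.multinomial univ k : ℤ) else 0 := by
    intro k hk
    rw [mem_piAntidiag] at hk
    have hsum : k 0 + k 1 + k 2 = n := by
      have := hk.1
      rwa [Fin.sum_univ_three] at this
    rw [prodmon]
    have hC : ((Nat.multinomial univ k : ℕ) : MvPolynomial (Fin 3) ℤ)
        = C ((Nat.multinomial univ k : ℕ) : ℤ) := by simp
    rw [hC, coeff_C_mul, coeff_monomial]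
    simp only [cond_iff n k hsum]
    split <;> simp
  rw [Finset.sum_congr rfl hterm]
  by_cases h3 : 3 ∣ n
  · rw [Finset.sum_eq_single (fun _ => n / 3)]
    · simp only [h3, and_true, if_pos rfl]
      have : Nat.multinomial (univ : Finset (Fin 3)) (fun _ => n / 3)
          = n.factorial / ((n / 3).factorial ^ 3) := by
        unfold Nat.multinomial
        rw [Fin.sum_univ_three, Fin.prod_univ_three]
        have : n / 3 + n / 3 + n / 3 = n := by omega
        rw [this]
        ring_nf
      rw [this]
    · intro k _ hne
      simp [hne]
    · intro habs
      exfalso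
      apply habs
      rw [mem_piAntidiag]
      refine ⟨by rw [Fin.sum_univ_three]; omega, fun i _ => mem_univ i⟩
  · simp [h3]

/-- For `P̃ = X²Y + Y²Z + Z²X`, the coefficient `c_n` of `XⁿYⁿZⁿ` in `P̃ⁿ` equals
`(3m)!/(m!)³` when `n = 3m`, and `0` when `3 ∤ n`. -/
theorem stmt5 (n : ℕ) (hn : 1 ≤ n) :
    (∀ m : ℕ, n = 3 * m →
      MvPolynomial.coeff (diagExp n)
        ((X 0 ^ 2 * X 1 + X 1 ^ 2 * X 2 + X 2 ^ 2 * X 0 : MvPolynomial (Fin 3) ℤ) ^ n)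
        = ((3 * m).factorial / (m.factorial ^ 3) : ℕ)) ∧
    (¬ (3 ∣ n) →
      MvPolynomial.coeff (diagExp n)
        ((X 0 ^ 2 * X 1 + X 1 ^ 2 * X 2 + X 2 ^ 2 * X 0 : MvPolynomial (Fin 3) ℤ) ^ n) = 0) := by
  constructor
  · rintro m rfl
    rw [key]
    have h3 : (3 : ℕ) ∣ 3 * m := ⟨m, rfl⟩
    rw [if_pos h3, Nat.mul_div_cancel_left m (by norm_num)]
  · intro h3
    rw [key, if_neg h3]
end

section
/- Let P̃ = (X+Y)(XY+Z^2) ∈ ℤ[X,Y,Z]. For every n ≥ 1, the coefficient c_n of the monomial X^n Y^n Z^n in P̃^n equals ((2m)!)^2 / (m!)^4 (i.e. the square of the central binomial coefficient C(2m,m)) if n = 2m for some integer m, and equals 0 if n is odd. -/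
open MvPolynomial

lemma term_eq_monomial (n i j : ℕ) :
    ((X 0 : MvPolynomial (Fin 3) ℤ) ^ i * X 1 ^ (n - i) * (n.choose i : MvPolynomial (Fin 3) ℤ)) *
    ((X 0 * X 1) ^ j * (X 2 ^ 2) ^ (n - j) * (n.choose j : MvPolynomial (Fin 3) ℤ)) =
    monomial (Finsupp.single 0 (i + j) + Finsupp.single 1 ((n - i) + j) + Finsupp.single 2 (2 * (n - j)))
        ((n.choose i : ℤ) * n.choose j) := by
  simp only [X_pow_eq_monomial, X, ← map_natCast (C : ℤ →+* MvPolynomial (Fin 3) ℤ), C_apply,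
    monomial_mul, monomial_pow, one_mul, mul_one, one_pow, Finsupp.smul_single, smul_eq_mul]
  refine (MvPolynomial.monomial_eq_monomial_iff _ _ _ _).mpr (Or.inl ⟨?_, by ring⟩)
  ext k
  simp [Finsupp.single_apply]
  split_ifs <;> omega

lemma exp_eq_diag (a b c n : ℕ) :
    (Finsupp.single (0 : Fin 3) a + Finsupp.single 1 b + Finsupp.single 2 c = diagExp n)
      ↔ a = n ∧ b = n ∧ c = n := by
  constructor
  · intro h
    refine ⟨?_, ?_, ?_⟩
    · have := DFunLike.congr_fun h 0; simpa [diagExp, Finsupp.single_apply] using this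
    · have := DFunLike.congr_fun h 1; simpa [diagExp, Finsupp.single_apply] using this
    · have := DFunLike.congr_fun h 2; simpa [diagExp, Finsupp.single_apply] using this
  · rintro ⟨rfl, rfl, rfl⟩; rfl

lemma coeff_as_sum (n : ℕ) :
    MvPolynomial.coeff (diagExp n)
        (((X 0 + X 1) * (X 0 * X 1 + X 2 ^ 2) : MvPolynomial (Fin 3) ℤ) ^ n)
      = ∑ i ∈ Finset.range (n + 1), ∑ j ∈ Finset.range (n + 1),
          if i + j = n ∧ (n - i) + j = n ∧ 2 * (n - j) = n
          then (n.choose i : ℤ) * n.choose j else 0 := by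
  rw [mul_pow, add_pow, add_pow, Finset.sum_mul_sum]
  rw [MvPolynomial.coeff_sum]
  refine Finset.sum_congr rfl fun i _ => ?_
  rw [MvPolynomial.coeff_sum]
  refine Finset.sum_congr rfl fun j _ => ?_
  rw [term_eq_monomial, MvPolynomial.coeff_monomial]
  by_cases h : i + j = n ∧ (n - i) + j = n ∧ 2 * (n - j) = n
  · rw [if_pos ((exp_eq_diag _ _ _ n).mpr ⟨h.1, h.2.1, h.2.2⟩), if_pos h]
  · rw [if_neg (fun he => h ((exp_eq_diag _ _ _ n).mp he)), if_neg h]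

/-- For `P̃ = (X+Y)(XY+Z²)`, the coefficient `c_n` of `XⁿYⁿZⁿ` in `P̃ⁿ` equals
`((2m)!)²/(m!)⁴ = C(2m,m)²` when `n = 2m`, and `0` when `n` is odd. -/
theorem stmt6 (n : ℕ) (hn : 1 ≤ n) :
    (∀ m : ℕ, n = 2 * m →
      MvPolynomial.coeff (diagExp n)
        (((X 0 + X 1) * (X 0 * X 1 + X 2 ^ 2) : MvPolynomial (Fin 3) ℤ) ^ n)
        = (Nat.choose (2 * m) m ^ 2 : ℕ)) ∧
    (Odd n →
      MvPolynomial.coeff (diagExp n)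
        (((X 0 + X 1) * (X 0 * X 1 + X 2 ^ 2) : MvPolynomial (Fin 3) ℤ) ^ n) = 0) := by
  rw [coeff_as_sum]
  constructor
  · rintro m rfl
    rw [Finset.sum_eq_single m]
    · rw [Finset.sum_eq_single m]
      · rw [if_pos (by omega)]
        push_cast
        ring
      · intro j hj hjm
        rw [if_neg (by omega)]
      · intro hm
        simp at hm
        omega
    · intro i hi him
      refine Finset.sum_eq_zero fun j hj => ?_
      simp at hi hj
      rw [if_neg (by omega)]
    · intro hm
      simp at hm
      omega
  · intro hodd
    refine Finset.sum_eq_zero fun i _ => Finset.sum_eq_zero fun j hj => ?_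
    simp at hj
    obtain ⟨k, hk⟩ := hodd
    rw [if_neg (by omega)]
end

section
/- Let P̃ = (X+Y+Z)(X+Z)(Y+Z) ∈ ℤ[X,Y,Z]. For every n ≥ 1, the coefficient c_n of the monomial X^n Y^n Z^n in P̃^n equals the Apéry number Σ_{k=0}^{n} C(n,k)^2 · C(n+k,k). -/
/-!
Write `P̃ⁿ = (X+Y+Z)ⁿ (X+Z)ⁿ (Y+Z)ⁿ` and expand each factor. A monomial
`C(n,i) C(n-i,j) XⁱYʲZⁿ⁻ⁱ⁻ʲ` of the first factor reaches `XⁿYⁿZⁿ` only together with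
`Xⁿ⁻ⁱZⁱ` from the second and `Yⁿ⁻ʲZʲ` from the third, so
`c_n = Σ_{i+j≤n} C(n,i)² C(n-i,j) C(n,j)`. Vandermonde's identity sums out `j`, leaving
`Σ_i C(n,i)² C(2n-i, n-i)`, which is the Apéry sum after `i ↦ n - i`.
-/

open MvPolynomial

open Finset

namespace MvPolynomial

variable {σ R : Type*} [CommSemiring R]

theorem X_add_X_pow (i j : σ) (n : ℕ) :
    (X i + X j : MvPolynomial σ R) ^ n =
      ∑ a ∈ range (n + 1),
        monomial (Finsupp.single i a + Finsupp.single j (n - a)) (n.choose a : R) := by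
  rw [add_pow]
  refine sum_congr rfl fun a _ => ?_
  rw [X_pow_eq_monomial, X_pow_eq_monomial, monomial_mul, ← map_natCast (C : R →+* _),
    mul_comm, C_mul_monomial, mul_one, mul_one]

theorem X_add_X_add_X_pow (i j k : σ) (n : ℕ) :
    (X i + X j + X k : MvPolynomial σ R) ^ n =
      ∑ a ∈ range (n + 1), ∑ b ∈ range (n - a + 1),
        monomial (Finsupp.single i a + Finsupp.single j b + Finsupp.single k (n - a - b))
          (n.choose a * (n - a).choose b : R) := by
  rw [add_assoc, add_pow]
  refine sum_congr rfl fun a _ => ?_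
  rw [X_add_X_pow, mul_sum, sum_mul]
  refine sum_congr rfl fun b _ => ?_
  rw [X_pow_eq_monomial, ← map_natCast (C : R →+* _), monomial_mul, mul_comm, C_mul_monomial,
    one_mul, add_assoc, Nat.sub_sub]

end MvPolynomial

theorem Nat.sum_range_choose_mul_choose (m n : ℕ) :
    ∑ j ∈ range (m + 1), n.choose j * m.choose j = (n + m).choose m := by
  rw [Nat.add_choose_eq, Nat.sum_antidiagonal_eq_sum_range_succ_mk]
  refine sum_congr rfl fun j hj => ?_
  rw [Nat.choose_symm (mem_range_succ_iff.mp hj)]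

theorem trinomial_exponent_add_eq_diagExp_iff {n i j a b : ℕ} (hij : i + j ≤ n) :
    (Finsupp.single 0 i + Finsupp.single 1 j + Finsupp.single 2 (n - i - j)) +
        ((Finsupp.single 0 a + Finsupp.single 2 (n - a)) +
          (Finsupp.single 1 b + Finsupp.single 2 (n - b))) = diagExp n ↔
      a = n - i ∧ b = n - j := by
  simp only [diagExp, Finsupp.ext_iff, Fin.forall_fin_succ, IsEmpty.forall_iff,
    Fin.succ_zero_eq_one, Fin.succ_one_eq_two, Finsupp.coe_add, Pi.add_apply,
    Finsupp.single_apply, Fin.reduceEq, reduceIte, add_zero, zero_add, and_true]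
  omega

theorem coeff_diagExp_pow {R : Type*} [CommSemiring R] (n : ℕ) :
    coeff (diagExp n)
        (((X 0 + X 1 + X 2) * (X 0 + X 2) * (X 1 + X 2) : MvPolynomial (Fin 3) R) ^ n) =
      ∑ i ∈ range (n + 1), ∑ j ∈ range (n - i + 1),
        (n.choose i * (n - i).choose j * (n.choose (n - i) * n.choose (n - j)) : R) := by
  rw [mul_pow, mul_pow, mul_assoc, X_add_X_add_X_pow, X_add_X_pow 0 2, X_add_X_pow 1 2,
    sum_mul_sum, sum_mul, coeff_sum]
  refine sum_congr rfl fun i hi => ?_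
  rw [sum_mul, coeff_sum]
  refine sum_congr rfl fun j hj => ?_
  have hij : i + j ≤ n := by simp only [mem_range] at hi hj; omega
  simp only [mul_sum, coeff_sum, monomial_mul, coeff_monomial,
    trinomial_exponent_add_eq_diagExp_iff hij, ite_and, sum_ite_irrel, sum_const_zero,
    sum_ite_eq', mem_range]
  rw [if_pos (by omega), if_pos (by omega)]

theorem sum_trinomial_mul_choose_eq_apery (n : ℕ) :
    ∑ i ∈ range (n + 1), ∑ j ∈ range (n - i + 1),
        n.choose i * (n - i).choose j * (n.choose (n - i) * n.choose (n - j)) =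
      ∑ k ∈ range (n + 1), n.choose k ^ 2 * (n + k).choose k := by
  calc _ = ∑ i ∈ range (n + 1), n.choose (n - i) ^ 2 * (n + (n - i)).choose (n - i) := by
        refine sum_congr rfl fun i hi => ?_
        rw [← Nat.sum_range_choose_mul_choose, mul_sum]
        refine sum_congr rfl fun j hj => ?_
        simp only [mem_range] at hi hj
        rw [← Nat.choose_symm (k := i) (by omega), Nat.choose_symm (k := j) (by omega)]
        ring
    _ = _ := by
        simpa only [Nat.add_sub_cancel] using
          sum_range_reflect (fun k => n.choose k ^ 2 * (n + k).choose k) (n + 1)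

theorem stmt7_general (n : ℕ) :
    MvPolynomial.coeff (diagExp n)
      (((X 0 + X 1 + X 2) * (X 0 + X 2) * (X 1 + X 2) : MvPolynomial (Fin 3) ℤ) ^ n)
      = ∑ k ∈ Finset.range (n + 1), (Nat.choose n k ^ 2 * Nat.choose (n + k) k : ℕ) := by
  rw [coeff_diagExp_pow]
  exact_mod_cast sum_trinomial_mul_choose_eq_apery n

/-- For `P̃ = (X+Y+Z)(X+Z)(Y+Z)`, the coefficient `c_n` of `XⁿYⁿZⁿ` in `P̃ⁿ`
equals the Apéry number `Σ_{k=0}^n C(n,k)² C(n+k,k)`. -/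
theorem stmt7 (n : ℕ) (hn : 1 ≤ n) :
    MvPolynomial.coeff (diagExp n)
      (((X 0 + X 1 + X 2) * (X 0 + X 2) * (X 1 + X 2) : MvPolynomial (Fin 3) ℤ) ^ n)
      = ∑ k ∈ Finset.range (n + 1), (Nat.choose n k ^ 2 * Nat.choose (n + k) k : ℕ) :=
  stmt7_general n
end

section
/- Let P̃ = (X+Y)(Y+Z)(Z+X) ∈ ℤ[X,Y,Z]. For every n ≥ 1, the coefficient c_n of the monomial X^n Y^n Z^n in P̃^n equals the Franel number Σ_{k=0}^{n} C(n,k)^3. -/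
open MvPolynomial

/-! Expand each factor `(X i + X j)ⁿ` binomially. A term of the triple product
`(X+Y)ⁿ(Y+Z)ⁿ(Z+X)ⁿ` picks exponents `a, b, c` and has monomial
`X^(a + n - c) Y^(n - a + b) Z^(n - b + c)`; it equals `XⁿYⁿZⁿ` exactly when `a = b = c`,
so only the diagonal terms `C(n,k)³` survive. -/

open Finset Finsupp in
theorem X_add_X_pow_eq_sum_monomial {R σ : Type*} [CommSemiring R] (i j : σ) (n : ℕ) :
    (X i + X j : MvPolynomial σ R) ^ n =
      ∑ a ∈ range (n + 1), monomial (single i a + single j (n - a)) (n.choose a : R) := by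
  rw [add_pow]
  refine sum_congr rfl fun a _ => ?_
  rw [X_pow_eq_monomial, X_pow_eq_monomial, monomial_mul, ← map_natCast (C (σ := σ)),
    mul_comm, C_mul_monomial, one_mul, mul_one]

open Finsupp in
theorem cyclic_exponent_eq_diagExp_iff {n a b c : ℕ} :
    single 0 a + single 1 (n - a) + (single 1 b + single 2 (n - b)) +
        (single 2 c + single 0 (n - c)) = diagExp n ↔
      a = b ∧ c = b ∧ b ≤ n := by
  constructor
  · intro h
    have h0 := DFunLike.congr_fun h 0
    have h1 := DFunLike.congr_fun h 1
    have h2 := DFunLike.congr_fun h 2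
    simp [diagExp] at h0 h1 h2
    omega
  · rintro ⟨rfl, rfl, hb⟩
    ext x
    fin_cases x <;> simp [diagExp] <;> omega

open Finset in
theorem stmt8_general (n : ℕ) :
    MvPolynomial.coeff (diagExp n)
      (((X 0 + X 1) * (X 1 + X 2) * (X 2 + X 0) : MvPolynomial (Fin 3) ℤ) ^ n)
      = ∑ k ∈ Finset.range (n + 1), (Nat.choose n k ^ 3 : ℕ) := by
  rw [mul_pow, mul_pow, X_add_X_pow_eq_sum_monomial 0 1, X_add_X_pow_eq_sum_monomial 1 2,
    X_add_X_pow_eq_sum_monomial 2 0]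
  simp only [sum_mul, mul_sum, monomial_mul, coeff_sum, coeff_monomial,
    cyclic_exponent_eq_diagExp_iff, ite_and, sum_ite_eq', mem_range]
  rw [sum_comm]
  push_cast
  refine sum_congr rfl fun b hb => ?_
  rw [mem_range] at hb
  simp [hb, Nat.lt_succ_iff.mp hb, pow_three, mul_assoc]

/-- For `P̃ = (X+Y)(Y+Z)(Z+X)`, the coefficient `c_n` of `XⁿYⁿZⁿ` in `P̃ⁿ`
equals the Franel number `Σ_{k=0}^n C(n,k)³`. -/
theorem stmt8 (n : ℕ) (hn : 1 ≤ n) :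
    MvPolynomial.coeff (diagExp n)
      (((X 0 + X 1) * (X 1 + X 2) * (X 2 + X 0) : MvPolynomial (Fin 3) ℤ) ^ n)
      = ∑ k ∈ Finset.range (n + 1), (Nat.choose n k ^ 3 : ℕ) :=
  stmt8_general n
end

section
/- Let P̃ = (X+Y)((X+Y+Z)^2 - 4YZ) ∈ ℤ[X,Y,Z]. For every n ≥ 1, the coefficient c_n of the monomial X^n Y^n Z^n in P̃^n equals C(2m,m)^2 if n = 2m for some integer m, and equals 0 if n is odd; in particular these coefficients coincide with those of the polynomial (X+Y)(XY+Z^2). -/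
namespace Step9A

open Finset Polynomial Nat




/-- signed summand coefficients for the `A`-polynomials -/
def dd (n k : ℕ) : ℤ := (-1)^k * 4^(n-k) * (n.choose k : ℤ) * (((n+k).choose k : ℕ) : ℤ)

def ddm (n k : ℕ) : ℤ := if k = 0 then 0 else dd n (k-1)

def cb (k : ℕ) : ℤ := (Nat.centralBinom k : ℤ)

def bb (n k : ℕ) : ℤ := (-1)^n * (if k ≤ n then cb k * cb (n-k) else 0)

lemma cb_succ (a : ℕ) : ((a : ℤ) + 1) * cb (a+1) = 2 * (2*a+1) * cb a := by
  have h := Nat.succ_mul_centralBinom_succ a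
  unfold cb
  have h2 : ((a + 1) * (a + 1).centralBinom : ℤ) = ((2 * (2 * a + 1) * a.centralBinom : ℕ) : ℤ) := by
    exact_mod_cast congrArg (fun x : ℕ => (x : ℤ)) h
  push_cast at h2
  linarith [h2]

lemma bb_key (a b : ℕ) :
    ((a:ℤ)+(b:ℤ)+2) * (cb (a+1) * cb (b+1)) =
      2*(2*((a:ℤ)+(b:ℤ))+3) * (cb (a+1) * cb b + cb a * cb (b+1))
        - 16*((a:ℤ)+(b:ℤ)+1) * (cb a * cb b) := by
  have h1 := cb_succ a
  have h2 := cb_succ b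
  have h12 : (((a:ℤ)+1) * cb (a+1)) * (((b:ℤ)+1) * cb (b+1))
      = (2 * (2*a+1) * cb a) * (2 * (2*b+1) * cb b) := by rw [h1, h2]
  have hne : (((a:ℤ)+1) * ((b:ℤ)+1)) ≠ 0 := by positivity
  apply mul_left_cancel₀ hne
  linear_combination ((a:ℤ)+(b:ℤ)+2) * h12
    - 2*(2*((a:ℤ)+(b:ℤ))+3)*((b:ℤ)+1)*(cb b) * h1
    - 2*(2*((a:ℤ)+(b:ℤ))+3)*((a:ℤ)+1)*(cb a) * h2





lemma factcast (p : ℕ) : ((p)! : ℚ) ≠ 0 := Nat.cast_ne_zero.2 (Nat.factorial_ne_zero p)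

lemma key2 (j m : ℕ) :
    (j+m+3) * ((j+m+3).choose (j+1)) * ((2*j+m+4).choose (j+1))
      + (j+m+2) * ((j+m+1).choose (j+1)) * ((2*j+m+2).choose (j+1))
    = 2*(2*j+2*m+5) * ((j+m+2).choose j) * ((2*j+m+2).choose j)
      + (2*j+2*m+5) * ((j+m+2).choose (j+1)) * ((2*j+m+3).choose (j+1)) := by
  have e1 : ((j+m+3)! : ℚ) = (j+m+3)*(j+m+2)*((j+m+1)!) := by
    rw [show j+m+3 = (j+m+1)+1+1 by omega]
    push_cast [Nat.factorial_succ]; ring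
  have e2 : ((j+m+2)! : ℚ) = (j+m+2)*((j+m+1)!) := by
    rw [show j+m+2 = (j+m+1)+1 by omega]
    push_cast [Nat.factorial_succ]; ring
  have e3 : ((2*j+m+4)! : ℚ) = (2*j+m+4)*(2*j+m+3)*((2*j+m+2)!) := by
    rw [show 2*j+m+4 = (2*j+m+2)+1+1 by omega]
    push_cast [Nat.factorial_succ]; ring
  have e4 : ((2*j+m+3)! : ℚ) = (2*j+m+3)*((2*j+m+2)!) := by
    rw [show 2*j+m+3 = (2*j+m+2)+1 by omega]
    push_cast [Nat.factorial_succ]; ring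
  have e5 : ((j+1)! : ℚ) = (j+1)*((j)!) := by push_cast [Nat.factorial_succ]; ring
  have e6 : ((m+2)! : ℚ) = (m+2)*(m+1)*((m)!) := by
    rw [show m+2 = m+1+1 by omega]; push_cast [Nat.factorial_succ]; ring
  have e7 : ((m+1)! : ℚ) = (m+1)*((m)!) := by push_cast [Nat.factorial_succ]; ring
  have h : ((((j:ℚ)+m+3) * ((j+m+3).choose (j+1)) * ((2*j+m+4).choose (j+1))
      + ((j:ℚ)+m+2) * ((j+m+1).choose (j+1)) * ((2*j+m+2).choose (j+1)))
    = 2*(2*(j:ℚ)+2*m+5) * ((j+m+2).choose j) * ((2*j+m+2).choose j)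
      + (2*(j:ℚ)+2*m+5) * ((j+m+2).choose (j+1)) * ((2*j+m+3).choose (j+1))) := by
    rw [Nat.cast_choose (K := ℚ) (show j+1 ≤ j+m+3 by omega),
        Nat.cast_choose (K := ℚ) (show j+1 ≤ 2*j+m+4 by omega),
        Nat.cast_choose (K := ℚ) (show j+1 ≤ j+m+1 by omega),
        Nat.cast_choose (K := ℚ) (show j+1 ≤ 2*j+m+2 by omega),
        Nat.cast_choose (K := ℚ) (show j ≤ j+m+2 by omega),
        Nat.cast_choose (K := ℚ) (show j ≤ 2*j+m+2 by omega),
        Nat.cast_choose (K := ℚ) (show j+1 ≤ j+m+2 by omega),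
        Nat.cast_choose (K := ℚ) (show j+1 ≤ 2*j+m+3 by omega),
        show j+m+3-(j+1) = m+2 by omega, show 2*j+m+4-(j+1) = j+m+3 by omega,
        show j+m+1-(j+1) = m by omega, show 2*j+m+2-(j+1) = j+m+1 by omega,
        show j+m+2-j = m+2 by omega, show 2*j+m+2-j = j+m+2 by omega,
        show j+m+2-(j+1) = m+1 by omega, show 2*j+m+3-(j+1) = j+m+2 by omega,
        e1, e2, e3, e4, e5, e6, e7]
    have n1 := factcast j
    have n2 := factcast m
    have n3 := factcast (j+m+1)
    have n4 := factcast (2*j+m+2)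
    field_simp
    ring
  exact_mod_cast h

lemma key3 (n : ℕ) :
    (n+2)*(n+2) * ((2*n+3).choose (n+1))
    = 2*(2*n+3)*(n+1) * ((2*n+1).choose n) + (2*n+3) * ((2*n+2).choose (n+1)) := by
  have e1 : ((2*n+3)! : ℚ) = (2*n+3)*(2*n+2)*((2*n+1)!) := by
    rw [show 2*n+3 = (2*n+1)+1+1 by omega]; push_cast [Nat.factorial_succ]; ring
  have e2 : ((2*n+2)! : ℚ) = (2*n+2)*((2*n+1)!) := by
    rw [show 2*n+2 = (2*n+1)+1 by omega]; push_cast [Nat.factorial_succ]; ring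
  have e3 : ((n+1)! : ℚ) = (n+1)*((n)!) := by push_cast [Nat.factorial_succ]; ring
  have e4 : ((n+2)! : ℚ) = (n+2)*(n+1)*((n)!) := by
    rw [show n+2 = n+1+1 by omega]; push_cast [Nat.factorial_succ]; ring
  have h : (((n:ℚ)+2)*((n:ℚ)+2) * ((2*n+3).choose (n+1))
      = 2*(2*(n:ℚ)+3)*((n:ℚ)+1) * ((2*n+1).choose n) + (2*(n:ℚ)+3) * ((2*n+2).choose (n+1))) := by
    rw [Nat.cast_choose (K := ℚ) (show n+1 ≤ 2*n+3 by omega),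
        Nat.cast_choose (K := ℚ) (show n ≤ 2*n+1 by omega),
        Nat.cast_choose (K := ℚ) (show n+1 ≤ 2*n+2 by omega),
        show 2*n+3-(n+1) = n+2 by omega, show 2*n+1-n = n+1 by omega,
        show 2*n+2-(n+1) = n+1 by omega, e1, e2, e3, e4]
    have n1 := factcast n
    have n2 := factcast (2*n+1)
    field_simp
    ring
  exact_mod_cast h



def bbm (n k : ℕ) : ℤ := if k = 0 then 0 else bb n (k-1)

lemma dd_eq_zero {n k : ℕ} (h : n < k) : dd n k = 0 := by
  simp [dd, Nat.choose_eq_zero_of_lt h]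
lemma bb_eq_zero {n k : ℕ} (h : n < k) : bb n k = 0 := by
  simp [bb, Nat.not_le.2 h]

lemma dd_rec (n k : ℕ) :
    ((n:ℤ)+2) * dd (n+2) k + 2*(2*(n:ℤ)+3) * ddm (n+1) k
      - 4*(2*(n:ℤ)+3) * dd (n+1) k + 16*((n:ℤ)+1) * dd n k = 0 := by
  rcases Nat.lt_or_ge n k with hnk | hnk
  · -- k ≥ n+1 : three boundary cases
    rcases Nat.lt_or_ge (n+2) k with h5 | h5
    · -- k ≥ n+3 : everything vanishes
      have h1 : ddm (n+1) k = dd (n+1) (k-1) := by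
        unfold ddm; rw [if_neg (by omega)]
      rw [h1, dd_eq_zero (show n+2 < k by omega), dd_eq_zero (show n+1 < k-1 by omega),
        dd_eq_zero (show n+1 < k by omega), dd_eq_zero (show n < k by omega)]
      ring
    · rcases Nat.eq_or_lt_of_le h5 with h6 | h6
      · -- k = n+2
        subst h6
        have hcb := Nat.succ_mul_centralBinom_succ (n+1)
        rw [Nat.centralBinom_eq_two_mul_choose, Nat.centralBinom_eq_two_mul_choose] at hcb
        have hcbz : ((n:ℤ)+2) * ((2*(n+2)).choose (n+2) : ℤ)
            = 2*(2*(n:ℤ)+3) * ((2*(n+1)).choose (n+1) : ℤ) := by exact_mod_cast hcb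
        have d1 : dd (n+2) (n+2) = (-1)^n * ((2*(n+2)).choose (n+2) : ℤ) := by
          unfold dd
          rw [show n+2-(n+2) = 0 by omega, Nat.choose_self, show (n+2)+(n+2) = 2*(n+2) by omega]
          have : ((-1:ℤ))^(n+2) = (-1)^n := by
            rw [pow_add]; ring
          rw [this]; ring
        have d2 : ddm (n+1) (n+2) = (-1)^(n+1) * ((2*(n+1)).choose (n+1) : ℤ) := by
          unfold ddm dd
          rw [if_neg (by omega), show n+2-1 = n+1 by omega,
            show n+1-(n+1) = 0 by omega, Nat.choose_self,
            show (n+1)+(n+1) = 2*(n+1) by omega]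
          ring
        have d3 : dd (n+1) (n+2) = 0 := dd_eq_zero (by omega)
        have d4 : dd n (n+2) = 0 := dd_eq_zero (by omega)
        rw [d1, d2, d3, d4]
        have : ((-1:ℤ))^(n+1) = -(-1)^n := by rw [pow_add]; ring
        rw [this]
        linear_combination ((-1:ℤ)^n) * hcbz
      · -- k = n+1
        have h7 : k = n+1 := by omega
        subst h7
        have hkz : ((n:ℤ)+2)*((n:ℤ)+2) * (((2*n+3).choose (n+1) : ℕ) : ℤ)
            = 2*(2*(n:ℤ)+3)*((n:ℤ)+1) * (((2*n+1).choose n : ℕ) : ℤ)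
              + (2*(n:ℤ)+3) * (((2*n+2).choose (n+1) : ℕ) : ℤ) := by exact_mod_cast key3 n
        have d1 : dd (n+2) (n+1) = (-1)^(n+1) * 4 * ((n:ℤ)+2) * (((2*n+3).choose (n+1) : ℕ) : ℤ) := by
          unfold dd
          rw [show n+2-(n+1) = 1 by omega, show (n+2)+(n+1) = 2*n+3 by omega,
            show n+2 = (n+1)+1 from rfl, Nat.choose_succ_self_right]
          push_cast; ring
        have d2 : ddm (n+1) (n+1) = (-1)^n * 4 * ((n:ℤ)+1) * (((2*n+1).choose n : ℕ) : ℤ) := by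
          unfold ddm dd
          rw [if_neg (by omega), show n+1-1 = n by omega, show n+1-n = 1 by omega,
            show (n+1)+n = 2*n+1 by omega, show n+1 = n+1 from rfl, Nat.choose_succ_self_right]
          push_cast; ring
        have d3 : dd (n+1) (n+1) = (-1)^(n+1) * (((2*n+2).choose (n+1) : ℕ) : ℤ) := by
          unfold dd
          rw [show n+1-(n+1) = 0 by omega, Nat.choose_self, show (n+1)+(n+1) = 2*n+2 by omega]
          ring
        have d4 : dd n (n+1) = 0 := dd_eq_zero (by omega)
        rw [d1, d2, d3, d4]
        have : ((-1:ℤ))^(n+1) = -(-1)^n := by rw [pow_add]; ring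
        rw [this]
        linear_combination (-4*(-1:ℤ)^n) * hkz
  · -- k ≤ n
    rcases Nat.eq_zero_or_pos k with h0 | h0
    · subst h0
      unfold dd ddm
      simp only [if_pos rfl]
      rw [show n+2-0 = n+2 from rfl, show n+1-0 = n+1 from rfl, show n-0 = n from rfl]
      simp only [Nat.choose_zero_right, Nat.add_zero, Nat.choose_zero_right]
      rw [show n+2 = n+1+1 from rfl, pow_succ, pow_succ]
      push_cast; ring
    · obtain ⟨j, rfl⟩ : ∃ j, k = j+1 := ⟨k-1, by omega⟩
      obtain ⟨m, rfl⟩ : ∃ m, n = j+1+m := ⟨n-(j+1), by omega⟩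
      have hkz : ((j:ℤ)+m+3) * (((j+m+3).choose (j+1) : ℕ) : ℤ) * (((2*j+m+4).choose (j+1) : ℕ) : ℤ)
            + ((j:ℤ)+m+2) * (((j+m+1).choose (j+1) : ℕ) : ℤ) * (((2*j+m+2).choose (j+1) : ℕ) : ℤ)
          = 2*(2*(j:ℤ)+2*m+5) * (((j+m+2).choose j : ℕ) : ℤ) * (((2*j+m+2).choose j : ℕ) : ℤ)
            + (2*(j:ℤ)+2*m+5) * (((j+m+2).choose (j+1) : ℕ) : ℤ) * (((2*j+m+3).choose (j+1) : ℕ) : ℤ) := by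
        exact_mod_cast key2 j m
      have d1 : dd (j+1+m+2) (j+1)
          = (-1)^(j+1) * 4^(m+2) * (((j+m+3).choose (j+1) : ℕ) : ℤ) * (((2*j+m+4).choose (j+1) : ℕ) : ℤ) := by
        unfold dd
        rw [show j+1+m+2-(j+1) = m+2 by omega, show j+1+m+2 = j+m+3 by omega,
          show (j+m+3)+(j+1) = 2*j+m+4 by omega]
      have d2 : ddm (j+1+m+1) (j+1)
          = (-1)^j * 4^(m+2) * (((j+m+2).choose j : ℕ) : ℤ) * (((2*j+m+2).choose j : ℕ) : ℤ) := by
        unfold ddm dd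
        rw [if_neg (by omega), show j+1-1 = j by omega, show j+1+m+1-j = m+2 by omega,
          show j+1+m+1 = j+m+2 by omega, show (j+m+2)+j = 2*j+m+2 by omega]
      have d3 : dd (j+1+m+1) (j+1)
          = (-1)^(j+1) * 4^(m+1) * (((j+m+2).choose (j+1) : ℕ) : ℤ) * (((2*j+m+3).choose (j+1) : ℕ) : ℤ) := by
        unfold dd
        rw [show j+1+m+1-(j+1) = m+1 by omega, show j+1+m+1 = j+m+2 by omega,
          show (j+m+2)+(j+1) = 2*j+m+3 by omega]
      have d4 : dd (j+1+m) (j+1)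
          = (-1)^(j+1) * 4^m * (((j+m+1).choose (j+1) : ℕ) : ℤ) * (((2*j+m+2).choose (j+1) : ℕ) : ℤ) := by
        unfold dd
        rw [show j+1+m-(j+1) = m by omega, show j+1+m = j+m+1 by omega,
          show (j+m+1)+(j+1) = 2*j+m+2 by omega]
      rw [d1, d2, d3, d4]
      have hs : ((-1:ℤ))^(j+1) = -(-1)^j := by rw [pow_add]; ring
      have h41 : (4:ℤ)^(m+2) = 16 * 4^m := by rw [pow_add]; ring
      have h42 : (4:ℤ)^(m+1) = 4 * 4^m := by rw [pow_add]; ring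
      rw [hs, h41, h42]
      push_cast
      linear_combination ((-16:ℤ) * 4^m * (-1:ℤ)^j) * hkz






lemma cb_zero : cb 0 = 1 := by simp [cb, Nat.centralBinom]

lemma neg_one_pow_add_two (n : ℕ) : ((-1:ℤ))^(n+2) = (-1)^n := by rw [pow_add]; ring
lemma neg_one_pow_add_one (n : ℕ) : ((-1:ℤ))^(n+1) = -(-1)^n := by rw [pow_add]; ring

lemma cb_succ' (n : ℕ) : ((n:ℤ)+2) * cb (n+2) = 2*(2*(n:ℤ)+3) * cb (n+1) := by
  have hc := cb_succ (n+1)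
  push_cast at hc
  linarith [hc]

lemma bb_rec (n k : ℕ) :
    ((n:ℤ)+2) * bb (n+2) k + 2*(2*(n:ℤ)+3) * (bb (n+1) k + bbm (n+1) k)
      + 16*((n:ℤ)+1) * bbm n k = 0 := by
  rcases Nat.eq_zero_or_pos k with h0 | h0
  · subst h0
    have b1 : bb (n+2) 0 = (-1)^n * cb (n+2) := by
      unfold bb
      rw [if_pos (by omega), show n+2-0 = n+2 from rfl, neg_one_pow_add_two, cb_zero]; ring
    have b2 : bb (n+1) 0 = -((-1)^n * cb (n+1)) := by
      unfold bb
      rw [if_pos (by omega), show n+1-0 = n+1 from rfl, neg_one_pow_add_one, cb_zero]; ring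
    have b3 : bbm (n+1) 0 = 0 := by simp [bbm]
    have b4 : bbm n 0 = 0 := by simp [bbm]
    rw [b1, b2, b3, b4]
    linear_combination ((-1:ℤ)^n) * cb_succ' n
  · rcases Nat.lt_or_ge (n+2) k with h5 | h5
    · -- k > n+2 : everything vanishes
      have b1 := bb_eq_zero (show n+2 < k by omega)
      have b2 := bb_eq_zero (show n+1 < k by omega)
      have b3 : bbm (n+1) k = 0 := by
        unfold bbm; rw [if_neg (by omega)]; exact bb_eq_zero (by omega)
      have b4 : bbm n k = 0 := by
        unfold bbm; rw [if_neg (by omega)]; exact bb_eq_zero (by omega)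
      rw [b1, b2, b3, b4]; ring
    · rcases Nat.eq_or_lt_of_le h5 with h6 | h6
      · -- k = n+2
        subst h6
        have b1 : bb (n+2) (n+2) = (-1)^n * cb (n+2) := by
          unfold bb
          rw [if_pos (by omega), Nat.sub_self, neg_one_pow_add_two, cb_zero]; ring
        have b2 : bb (n+1) (n+2) = 0 := bb_eq_zero (by omega)
        have b3 : bbm (n+1) (n+2) = -((-1)^n * cb (n+1)) := by
          unfold bbm bb
          rw [if_neg (by omega), show n+2-1 = n+1 from rfl, if_pos (by omega),
            Nat.sub_self, neg_one_pow_add_one, cb_zero]; ring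
        have b4 : bbm n (n+2) = 0 := by
          unfold bbm; rw [if_neg (by omega)]; exact bb_eq_zero (by omega)
        rw [b1, b2, b3, b4]
        linear_combination ((-1:ℤ)^n) * cb_succ' n
      · -- 1 ≤ k ≤ n+1
        obtain ⟨a, rfl⟩ : ∃ a, k = a+1 := ⟨k-1, by omega⟩
        obtain ⟨b, rfl⟩ : ∃ b, n = a+b := ⟨n-a, by omega⟩
        have b1 : bb (a+b+2) (a+1) = (-1)^(a+b) * (cb (a+1) * cb (b+1)) := by
          unfold bb
          rw [if_pos (by omega), show a+b+2-(a+1) = b+1 by omega, neg_one_pow_add_two]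
        have b2 : bb (a+b+1) (a+1) = -((-1)^(a+b) * (cb (a+1) * cb b)) := by
          unfold bb
          rw [if_pos (by omega), show a+b+1-(a+1) = b by omega, neg_one_pow_add_one]; ring
        have b3 : bbm (a+b+1) (a+1) = -((-1)^(a+b) * (cb a * cb (b+1))) := by
          unfold bbm bb
          rw [if_neg (by omega), show a+1-1 = a from rfl, if_pos (by omega),
            show a+b+1-a = b+1 by omega, neg_one_pow_add_one]; ring
        have b4 : bbm (a+b) (a+1) = (-1)^(a+b) * (cb a * cb b) := by
          unfold bbm bb
          rw [if_neg (by omega), show a+1-1 = a from rfl, if_pos (by omega),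
            show a+b-a = b by omega]
        rw [b1, b2, b3, b4]
        push_cast
        linear_combination ((-1:ℤ)^(a+b)) * bb_key a b






noncomputable def AA (n : ℕ) : Polynomial ℤ :=
  ∑ k ∈ range (n+1), C (dd n k) * (X + 1)^(2*k) * X^(n-k)

noncomputable def BB (n : ℕ) : Polynomial ℤ :=
  ∑ k ∈ range (n+1), C (bb n k) * X^(2*(n-k))

lemma AA_eq (n M : ℕ) (h : n+1 ≤ M) :
    AA n = ∑ k ∈ range M, C (dd n k) * (X + 1)^(2*k) * X^(n-k) := by
  rw [AA]
  apply Finset.sum_subset (by simpa using h)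
  intro x _ hx
  rw [dd_eq_zero (show n < x by simp at hx; omega)]
  simp

lemma BB_eq (n M : ℕ) (h : n+1 ≤ M) :
    BB n = ∑ k ∈ range M, C (bb n k) * X^(2*(n-k)) := by
  rw [BB]
  apply Finset.sum_subset (by simpa using h)
  intro x _ hx
  rw [bb_eq_zero (show n < x by simp at hx; omega)]
  simp

lemma AA_rec (n : ℕ) :
    C ((n:ℤ)+2) * AA (n+2) + C (2*(2*(n:ℤ)+3)) * (((X:Polynomial ℤ)^2+1) * AA (n+1))
      + C (16*((n:ℤ)+1)) * ((X:Polynomial ℤ)^2 * AA n) = 0 := by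
  have h1 : C ((n:ℤ)+2) * AA (n+2)
      = ∑ k ∈ range (n+3), C (((n:ℤ)+2) * dd (n+2) k) * (X + 1)^(2*k) * X^(n+2-k) := by
    rw [AA_eq (n+2) (n+3) (by omega), Finset.mul_sum]
    exact Finset.sum_congr rfl fun k _ => by rw [map_mul]; ring
  have hS1 : ((X:Polynomial ℤ) + 1)^2 * AA (n+1)
      = ∑ k ∈ range (n+3), C (ddm (n+1) k) * (X + 1)^(2*k) * X^(n+2-k) := by
    rw [Finset.sum_range_succ' (fun k => C (ddm (n+1) k) * (X + 1)^(2*k) * X^(n+2-k)) (n+2)]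
    have hf0 : C (ddm (n+1) 0) * ((X:Polynomial ℤ) + 1)^(2*0) * X^(n+2-0) = 0 := by
      simp [ddm]
    rw [hf0, add_zero, AA, Finset.mul_sum]
    apply Finset.sum_congr rfl
    intro k _
    have hd : ddm (n+1) (k+1) = dd (n+1) k := by
      unfold ddm; rw [if_neg (by omega), show k+1-1 = k from rfl]
    rw [hd, show 2*(k+1) = 2*k+2 by ring, pow_add, show n+2-(k+1) = n+1-k by omega]
    ring
  have hS2 : (2:Polynomial ℤ) * X * AA (n+1)
      = ∑ k ∈ range (n+3), C (2 * dd (n+1) k) * (X + 1)^(2*k) * X^(n+2-k) := by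
    rw [AA_eq (n+1) (n+3) (by omega), Finset.mul_sum]
    apply Finset.sum_congr rfl
    intro k hk
    rcases Nat.lt_or_ge k (n+2) with h2 | h2
    · rw [show n+2-k = (n+1-k)+1 by omega, pow_add]
      simp only [map_mul, map_ofNat]
      ring
    · rw [dd_eq_zero (show n+1 < k by omega)]
      simp
  have h2 : C (2*(2*(n:ℤ)+3)) * (((X:Polynomial ℤ)^2+1) * AA (n+1))
      = ∑ k ∈ range (n+3),
          C (2*(2*(n:ℤ)+3) * (ddm (n+1) k - 2 * dd (n+1) k)) * (X + 1)^(2*k) * X^(n+2-k) := by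
    have hsplit : ((X:Polynomial ℤ)^2+1) * AA (n+1)
        = ((X:Polynomial ℤ) + 1)^2 * AA (n+1) - (2:Polynomial ℤ) * X * AA (n+1) := by ring
    rw [hsplit, hS1, hS2, ← Finset.sum_sub_distrib, Finset.mul_sum]
    apply Finset.sum_congr rfl
    intro k _
    simp only [map_mul, map_sub, map_add, map_natCast, map_ofNat, map_one]
    ring
  have h3 : C (16*((n:ℤ)+1)) * ((X:Polynomial ℤ)^2 * AA n)
      = ∑ k ∈ range (n+3), C (16*((n:ℤ)+1) * dd n k) * (X + 1)^(2*k) * X^(n+2-k) := by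
    rw [AA_eq n (n+3) (by omega), Finset.mul_sum, Finset.mul_sum]
    apply Finset.sum_congr rfl
    intro k _
    rcases Nat.lt_or_ge k (n+1) with h2 | h2
    · rw [show n+2-k = (n-k)+2 by omega, pow_add]
      simp only [map_mul, map_add, map_natCast, map_ofNat, map_one]
      ring
    · rw [dd_eq_zero (show n < k by omega)]
      simp
  rw [h1, h2, h3, ← Finset.sum_add_distrib, ← Finset.sum_add_distrib]
  apply Finset.sum_eq_zero
  intro k _
  have hc : ((n:ℤ)+2) * dd (n+2) k + 2*(2*(n:ℤ)+3) * (ddm (n+1) k - 2 * dd (n+1) k)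
      + 16*((n:ℤ)+1) * dd n k = 0 := by linarith [dd_rec n k]
  calc C (((n:ℤ)+2) * dd (n+2) k) * (X + 1)^(2*k) * X^(n+2-k)
        + C (2*(2*(n:ℤ)+3) * (ddm (n+1) k - 2 * dd (n+1) k)) * (X + 1)^(2*k) * X^(n+2-k)
        + C (16*((n:ℤ)+1) * dd n k) * (X + 1)^(2*k) * X^(n+2-k)
      = C (((n:ℤ)+2) * dd (n+2) k + 2*(2*(n:ℤ)+3) * (ddm (n+1) k - 2 * dd (n+1) k)
          + 16*((n:ℤ)+1) * dd n k) * (X + 1)^(2*k) * X^(n+2-k) := by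
        simp only [map_add]; ring
    _ = 0 := by rw [hc]; simp

lemma BB_rec (n : ℕ) :
    C ((n:ℤ)+2) * BB (n+2) + C (2*(2*(n:ℤ)+3)) * (((X:Polynomial ℤ)^2+1) * BB (n+1))
      + C (16*((n:ℤ)+1)) * ((X:Polynomial ℤ)^2 * BB n) = 0 := by
  have h1 : C ((n:ℤ)+2) * BB (n+2)
      = ∑ k ∈ range (n+3), C (((n:ℤ)+2) * bb (n+2) k) * X^(2*(n+2-k)) := by
    rw [BB_eq (n+2) (n+3) (by omega), Finset.mul_sum]
    exact Finset.sum_congr rfl fun k _ => by rw [map_mul]; ring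
  have hS1 : ((X:Polynomial ℤ))^2 * BB (n+1)
      = ∑ k ∈ range (n+3), C (bb (n+1) k) * X^(2*(n+2-k)) := by
    rw [BB_eq (n+1) (n+3) (by omega), Finset.mul_sum]
    apply Finset.sum_congr rfl
    intro k _
    rcases Nat.lt_or_ge k (n+2) with h2 | h2
    · rw [show 2*(n+2-k) = 2*(n+1-k)+2 by omega, pow_add]
      ring
    · rw [bb_eq_zero (show n+1 < k by omega)]
      simp
  have hS2 : BB (n+1) = ∑ k ∈ range (n+3), C (bbm (n+1) k) * X^(2*(n+2-k)) := by
    rw [Finset.sum_range_succ' (fun k => C (bbm (n+1) k) * (X:Polynomial ℤ)^(2*(n+2-k))) (n+2)]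
    have hf0 : C (bbm (n+1) 0) * ((X:Polynomial ℤ))^(2*(n+2-0)) = 0 := by simp [bbm]
    rw [hf0, add_zero, BB]
    apply Finset.sum_congr rfl
    intro k _
    have hd : bbm (n+1) (k+1) = bb (n+1) k := by
      unfold bbm; rw [if_neg (by omega), show k+1-1 = k from rfl]
    rw [hd, show n+2-(k+1) = n+1-k by omega]
  have h2 : C (2*(2*(n:ℤ)+3)) * (((X:Polynomial ℤ)^2+1) * BB (n+1))
      = ∑ k ∈ range (n+3),
          C (2*(2*(n:ℤ)+3) * (bb (n+1) k + bbm (n+1) k)) * X^(2*(n+2-k)) := by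
    have hsplit : (((X:Polynomial ℤ)^2+1) * BB (n+1))
        = (X:Polynomial ℤ)^2 * BB (n+1) + BB (n+1) := by ring
    rw [hsplit, hS1]
    conv_lhs => rw [hS2]
    rw [← Finset.sum_add_distrib, Finset.mul_sum]
    apply Finset.sum_congr rfl
    intro k _
    simp only [map_mul, map_add, map_natCast, map_ofNat, map_one]
    ring
  have h3 : C (16*((n:ℤ)+1)) * ((X:Polynomial ℤ)^2 * BB n)
      = ∑ k ∈ range (n+3), C (16*((n:ℤ)+1) * bbm n k) * X^(2*(n+2-k)) := by
    have hBn : ((X:Polynomial ℤ))^2 * BB n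
        = ∑ k ∈ range (n+3), C (bbm n k) * X^(2*(n+2-k)) := by
      rw [Finset.sum_range_succ' (fun k => C (bbm n k) * (X:Polynomial ℤ)^(2*(n+2-k))) (n+2)]
      have hf0 : C (bbm n 0) * ((X:Polynomial ℤ))^(2*(n+2-0)) = 0 := by simp [bbm]
      rw [hf0, add_zero, BB_eq n (n+2) (by omega), Finset.mul_sum]
      apply Finset.sum_congr rfl
      intro k hk
      have hd : bbm n (k+1) = bb n k := by
        unfold bbm; rw [if_neg (by omega), show k+1-1 = k from rfl]
      rw [hd, show n+2-(k+1) = n+1-k by omega]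
      rcases Nat.lt_or_ge k (n+1) with h2 | h2
      · rw [show 2*(n+1-k) = 2*(n-k)+2 by omega, pow_add]
        ring
      · rw [bb_eq_zero (show n < k by omega)]
        simp
    rw [hBn, Finset.mul_sum]
    apply Finset.sum_congr rfl
    intro k _
    simp only [map_mul, map_add, map_natCast, map_ofNat, map_one]
    ring
  rw [h1, h2, h3, ← Finset.sum_add_distrib, ← Finset.sum_add_distrib]
  apply Finset.sum_eq_zero
  intro k _
  calc C (((n:ℤ)+2) * bb (n+2) k) * X^(2*(n+2-k))
        + C (2*(2*(n:ℤ)+3) * (bb (n+1) k + bbm (n+1) k)) * X^(2*(n+2-k))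
        + C (16*((n:ℤ)+1) * bbm n k) * X^(2*(n+2-k))
      = C (((n:ℤ)+2) * bb (n+2) k + 2*(2*(n:ℤ)+3) * (bb (n+1) k + bbm (n+1) k)
          + 16*((n:ℤ)+1) * bbm n k) * X^(2*(n+2-k)) := by
        simp only [map_add]; ring
    _ = 0 := by rw [bb_rec n k]; simp

lemma AA_eq_BB : ∀ n, AA n = BB n := by
  have base0 : AA 0 = BB 0 := by
    simp [AA, BB, dd, bb, cb, Nat.centralBinom]
  have base1 : AA 1 = BB 1 := by
    have c1 : cb 1 = 2 := by simp [cb, Nat.centralBinom]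
    have c0 : cb 0 = 1 := by simp [cb, Nat.centralBinom]
    simp [AA, BB, Finset.sum_range_succ, dd, bb, c1, c0]
    ring
  have step : ∀ n, AA n = BB n → AA (n+1) = BB (n+1) → AA (n+2) = BB (n+2) := by
    intro n h0 h1
    have ha := AA_rec n
    have hb := BB_rec n
    rw [h0, h1] at ha
    have hc : C ((n:ℤ)+2) * AA (n+2) = C ((n:ℤ)+2) * BB (n+2) := by
      have h4 : C ((n:ℤ)+2) * AA (n+2) - C ((n:ℤ)+2) * BB (n+2) = 0 := by
        linear_combination ha - hb
      exact sub_eq_zero.mp h4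
    exact mul_left_cancel₀ (by
      simp only [ne_eq, Polynomial.C_eq_zero]
      intro h
      omega) hc
  intro n
  induction n using Nat.twoStepInduction with
  | zero => exact base0
  | one => exact base1
  | more k ih1 ih2 => exact step k ih1 ih2






lemma coeff_AA (n : ℕ) :
    (AA n).coeff n = ∑ k ∈ range (n+1), dd n k * (((2*k).choose k : ℕ) : ℤ) := by
  rw [AA, Polynomial.finset_sum_coeff]
  apply Finset.sum_congr rfl
  intro k hk
  have hk' : k ≤ n := by simp at hk; omega
  rw [mul_assoc, Polynomial.coeff_C_mul, Polynomial.coeff_mul_X_pow' ((X+1)^(2*k)) (n-k) n,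
    if_pos (by omega), show n - (n-k) = k by omega, Polynomial.coeff_X_add_one_pow]

lemma coeff_BB_even (m : ℕ) :
    (BB (2*m)).coeff (2*m) = cb m * cb m := by
  rw [BB, Polynomial.finset_sum_coeff, Finset.sum_eq_single m]
  · rw [Polynomial.coeff_C_mul, Polynomial.coeff_X_pow, if_pos (by omega), mul_one]
    unfold bb
    rw [if_pos (by omega), show 2*m - m = m by omega, pow_mul]
    norm_num
  · intro j hj hne
    rw [Polynomial.coeff_C_mul, Polynomial.coeff_X_pow, if_neg, mul_zero]
    simp at hj
    omega
  · intro habs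
    exact (habs (Finset.mem_range.mpr (by omega))).elim

lemma coeff_BB_odd (n : ℕ) (h : Odd n) : (BB n).coeff n = 0 := by
  rw [BB, Polynomial.finset_sum_coeff]
  apply Finset.sum_eq_zero
  intro k _
  rw [Polynomial.coeff_C_mul, Polynomial.coeff_X_pow, if_neg, mul_zero]
  obtain ⟨t, rfl⟩ := h
  omega

lemma sum_T_eq (n : ℕ) :
    ∑ k ∈ range (n+1), ((-1:ℤ))^(n-k) * 4^k * ((n.choose k : ℕ) : ℤ)
        * (((2*(n-k)).choose (n-k) : ℕ) : ℤ) * (((n + (n-k)).choose (n-k) : ℕ) : ℤ)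
      = ∑ k ∈ range (n+1), dd n k * (((2*k).choose k : ℕ) : ℤ) := by
  rw [← Finset.sum_range_reflect (fun k => dd n k * (((2*k).choose k : ℕ) : ℤ)) (n+1)]
  apply Finset.sum_congr rfl
  intro k hk
  have hk' : k ≤ n := by simp at hk; omega
  show _ = dd n (n + 1 - 1 - k) * _
  rw [show n + 1 - 1 - k = n - k by omega]
  unfold dd
  rw [show n - (n-k) = k by omega, Nat.choose_symm hk']
  ring


end Step9A



open MvPolynomial

namespace Step9B

open Finset Step9A




abbrev R := MvPolynomial (Fin 3) ℤ

lemma diag_apply0 (n : ℕ) : diagExp n 0 = n := by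
  simp [diagExp, Finsupp.single_apply]
lemma diag_apply1 (n : ℕ) : diagExp n 1 = n := by
  simp [diagExp, Finsupp.single_apply]
lemma diag_apply2 (n : ℕ) : diagExp n 2 = n := by
  simp [diagExp, Finsupp.single_apply]

lemma coeff_XY_pow (e : ℕ) (d : Fin 3 →₀ ℕ) :
    MvPolynomial.coeff d ((X 0 + X 1 : R)^e)
      = if d 2 = 0 ∧ d 0 + d 1 = e then ((e.choose (d 0) : ℕ) : ℤ) else 0 := by
  rw [add_pow, MvPolynomial.coeff_sum]
  have hterm : ∀ k, ((X 0:R)^k * (X 1)^(e-k) * ((e.choose k : ℕ) : R))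
      = monomial (Finsupp.single 0 k + Finsupp.single 1 (e-k)) ((e.choose k : ℕ) : ℤ) := by
    intro k
    rw [X_pow_eq_monomial, X_pow_eq_monomial, monomial_mul, mul_one,
      show ((e.choose k : ℕ) : R) = C ((e.choose k : ℕ) : ℤ) from by norm_cast,
      mul_comm, C_mul_monomial, mul_one]
  simp only [hterm, coeff_monomial]
  by_cases hc : d 2 = 0 ∧ d 0 + d 1 = e
  · rw [if_pos hc]
    rw [Finset.sum_eq_single (d 0)]
    · rw [if_pos]
      ext i
      fin_cases i
      · simp [Finsupp.single_apply]
      · simp [Finsupp.single_apply]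
        omega
      · simp [Finsupp.single_apply]
        omega
    · intro k _ hne
      rw [if_neg]
      intro heq
      apply hne
      have := congrArg (fun f : Fin 3 →₀ ℕ => f 0) heq
      simpa [Finsupp.single_apply] using this
    · intro habs
      exact (habs (Finset.mem_range.mpr (by omega))).elim
  · rw [if_neg hc]
    apply Finset.sum_eq_zero
    intro k hk
    rw [if_neg]
    intro heq
    apply hc
    have h0 := congrArg (fun f : Fin 3 →₀ ℕ => f 0) heq
    have h1 := congrArg (fun f : Fin 3 →₀ ℕ => f 1) heq
    have h2 := congrArg (fun f : Fin 3 →₀ ℕ => f 2) heq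
    simp [Finsupp.single_apply] at h0 h1 h2
    simp at hk
    constructor
    · omega
    · omega

lemma coeff_key (n e a b c : ℕ) :
    MvPolynomial.coeff (diagExp n) ((X 0 + X 1 : R)^e * ((X 0:R)^a * (X 1)^b * (X 2)^c))
      = if a ≤ n ∧ b ≤ n ∧ c = n ∧ (n-a) + (n-b) = e
        then ((e.choose (n-a) : ℕ) : ℤ) else 0 := by
  have hmono : ((X 0:R)^a * (X 1)^b * (X 2)^c)
      = monomial (Finsupp.single 0 a + Finsupp.single 1 b + Finsupp.single 2 c) (1:ℤ) := by
    rw [X_pow_eq_monomial, X_pow_eq_monomial, X_pow_eq_monomial, monomial_mul, monomial_mul,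
      mul_one, mul_one]
  rw [hmono, coeff_mul_monomial']
  set s : Fin 3 →₀ ℕ := Finsupp.single 0 a + Finsupp.single 1 b + Finsupp.single 2 c with hs
  have hs0 : s 0 = a := by simp [hs, Finsupp.single_apply]
  have hs1 : s 1 = b := by simp [hs, Finsupp.single_apply]
  have hs2 : s 2 = c := by simp [hs, Finsupp.single_apply]
  by_cases hle : s ≤ diagExp n
  · rw [if_pos hle]
    have ha : a ≤ n := by
      have := hle 0
      rwa [hs0, diag_apply0] at this
    have hb : b ≤ n := by
      have := hle 1
      rwa [hs1, diag_apply1] at this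
    have hcn : c ≤ n := by
      have := hle 2
      rwa [hs2, diag_apply2] at this
    rw [coeff_XY_pow]
    have e0 : (diagExp n - s) 0 = n - a := by rw [Finsupp.tsub_apply, diag_apply0, hs0]
    have e1 : (diagExp n - s) 1 = n - b := by rw [Finsupp.tsub_apply, diag_apply1, hs1]
    have e2 : (diagExp n - s) 2 = n - c := by rw [Finsupp.tsub_apply, diag_apply2, hs2]
    rw [e0, e1, e2]
    by_cases hfin : a ≤ n ∧ b ≤ n ∧ c = n ∧ (n-a) + (n-b) = e
    · rw [if_pos hfin, if_pos ⟨by omega, hfin.2.2.2⟩, mul_one]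
    · have hnc : ¬((n:ℕ) - c = 0 ∧ n - a + (n - b) = e) :=
        fun hcon => hfin ⟨ha, hb, by omega, hcon.2⟩
      rw [if_neg hfin, if_neg hnc, mul_one]
  · rw [if_neg hle, if_neg]
    intro hcon
    apply hle
    intro i
    fin_cases i
    · show s 0 ≤ diagExp n 0
      rw [hs0, diag_apply0]; exact hcon.1
    · show s 1 ≤ diagExp n 1
      rw [hs1, diag_apply1]; exact hcon.2.1
    · show s 2 ≤ diagExp n 2
      rw [hs2, diag_apply2]; omega







lemma coeff_Pt (n : ℕ) :
    MvPolynomial.coeff (diagExp n)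
        (((X 0 + X 1) * ((X 0 + X 1 + X 2) ^ 2 - 4 * X 1 * X 2) : R) ^ n)
      = ∑ k ∈ range (n+1), ((-1:ℤ))^(n-k) * 4^k * ((n.choose k : ℕ) : ℤ)
          * (((2*(n-k)).choose (n-k) : ℕ) : ℤ) * (((n + (n-k)).choose (n-k) : ℕ) : ℤ) := by
  have hP : ((X 0 + X 1) * ((X 0 + X 1 + X 2) ^ 2 - 4 * X 1 * X 2) : R)
      = (X 0 + X 1) * (4*((X 0 : R) * X 2) + (X 0 + X 1 - X 2)^2) := by ring
  have hexp : ((4*((X 0 : R) * X 2) + (X 0 + X 1 - X 2)^2))^n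
      = ∑ k ∈ range (n+1), (4*((X 0 : R) * X 2))^k * ((X 0 + X 1 - X 2)^2)^(n-k)
          * ((n.choose k : ℕ) : R) := add_pow _ _ _
  rw [hP, mul_pow, hexp, Finset.mul_sum, MvPolynomial.coeff_sum]
  apply Finset.sum_congr rfl
  intro k hk
  have hkn : k ≤ n := by simp at hk; omega
  have hexp2 : ((-X 2) + (X 0 + X 1) : R)^(2*(n-k))
      = ∑ j ∈ range (2*(n-k)+1), (-X 2 : R)^j * (X 0 + X 1)^(2*(n-k)-j)
          * (((2*(n-k)).choose j : ℕ) : R) := add_pow _ _ _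
  rw [← pow_mul, show ((X 0 + X 1 - X 2 : R)) = (-X 2) + (X 0 + X 1) by ring, hexp2,
    Finset.mul_sum, Finset.sum_mul, Finset.mul_sum, MvPolynomial.coeff_sum]
  rw [Finset.sum_eq_single (n-k)]
  · have harr : (X 0 + X 1 : R)^n * ((4*((X 0:R) * X 2))^k * ((-X 2)^(n-k)
        * (X 0 + X 1)^(2*(n-k)-(n-k)) * (((2*(n-k)).choose (n-k) : ℕ) : R))
        * ((n.choose k : ℕ) : R))
        = MvPolynomial.C (((-1:ℤ))^(n-k) * 4^k * ((n.choose k : ℕ) : ℤ)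
            * (((2*(n-k)).choose (n-k) : ℕ) : ℤ))
          * ((X 0 + X 1 : R)^(n + (n-k)) * ((X 0:R)^k * (X 1)^0 * (X 2)^(k + (n-k)))) := by
      rw [show 2*(n-k)-(n-k) = n-k by omega, pow_add, pow_add]
      simp only [map_mul, map_pow, map_neg, map_one, map_natCast, map_ofNat]
      ring
    rw [harr, MvPolynomial.coeff_C_mul, coeff_key]
    rw [if_pos ⟨hkn, by omega, by omega, by omega⟩]
  · intro j hj hne
    have harr2 : (X 0 + X 1 : R)^n * ((4*((X 0:R) * X 2))^k * ((-X 2)^j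
        * (X 0 + X 1)^(2*(n-k)-j) * (((2*(n-k)).choose j : ℕ) : R))
        * ((n.choose k : ℕ) : R))
        = MvPolynomial.C (((-1:ℤ))^j * 4^k * ((n.choose k : ℕ) : ℤ)
            * (((2*(n-k)).choose j : ℕ) : ℤ))
          * ((X 0 + X 1 : R)^(n + (2*(n-k)-j)) * ((X 0:R)^k * (X 1)^0 * (X 2)^(k + j))) := by
      rw [pow_add]
      simp only [map_mul, map_pow, map_neg, map_one, map_natCast, map_ofNat]
      ring
    rw [harr2, MvPolynomial.coeff_C_mul, coeff_key, if_neg, mul_zero]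
    intro hcon
    exact hne (by omega)
  · intro habs
    exact (habs (Finset.mem_range.mpr (by omega))).elim


lemma coeff_P_sum (n : ℕ) :
    MvPolynomial.coeff (diagExp n) (((X 0 + X 1) * (X 0 * X 1 + X 2 ^ 2) : R)^n)
      = ∑ k ∈ range (n+1), ((n.choose k : ℕ) : ℤ)
          * (if k ≤ n ∧ k ≤ n ∧ 2*(n-k) = n ∧ (n-k)+(n-k) = n
             then ((n.choose (n-k) : ℕ) : ℤ) else 0) := by
  have hexp : ((X 0 * X 1 + (X 2:R)^2))^n
      = ∑ k ∈ range (n+1), ((X 0:R) * X 1)^k * ((X 2:R)^2)^(n-k) * ((n.choose k : ℕ) : R) :=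
    add_pow _ _ _
  rw [mul_pow, hexp, Finset.mul_sum, MvPolynomial.coeff_sum]
  apply Finset.sum_congr rfl
  intro k _
  have harr : (X 0 + X 1 : R)^n * (((X 0:R) * X 1)^k * ((X 2:R)^2)^(n-k) * ((n.choose k : ℕ) : R))
      = MvPolynomial.C ((n.choose k : ℕ) : ℤ)
        * ((X 0 + X 1 : R)^n * ((X 0:R)^k * (X 1)^k * (X 2)^(2*(n-k)))) := by
    rw [← pow_mul]
    simp only [map_natCast]
    ring
  rw [harr, MvPolynomial.coeff_C_mul, coeff_key]

lemma coeff_P_even (m : ℕ) :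
    MvPolynomial.coeff (diagExp (2*m)) (((X 0 + X 1) * (X 0 * X 1 + X 2 ^ 2) : R)^(2*m))
      = (((2*m).choose m : ℕ) : ℤ)^2 := by
  rw [coeff_P_sum, Finset.sum_eq_single m]
  · rw [if_pos ⟨by omega, by omega, by omega, by omega⟩, show 2*m - m = m by omega]
    ring
  · intro j hj hne
    rw [if_neg, mul_zero]
    intro hcon
    exact hne (by omega)
  · intro habs
    exact (habs (Finset.mem_range.mpr (by omega))).elim

lemma coeff_P_odd (n : ℕ) (h : Odd n) :
    MvPolynomial.coeff (diagExp n) (((X 0 + X 1) * (X 0 * X 1 + X 2 ^ 2) : R)^n) = 0 := by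
  rw [coeff_P_sum]
  apply Finset.sum_eq_zero
  intro k _
  rw [if_neg, mul_zero]
  intro hcon
  obtain ⟨t, rfl⟩ := h
  omega


lemma main_chain (n : ℕ) :
    MvPolynomial.coeff (diagExp n)
        (((X 0 + X 1) * ((X 0 + X 1 + X 2) ^ 2 - 4 * X 1 * X 2) : R) ^ n)
      = (Step9A.BB n).coeff n := by
  rw [coeff_Pt n, Step9A.sum_T_eq n, ← Step9A.coeff_AA n, Step9A.AA_eq_BB n]

end Step9B

/-- For `P̃ = (X+Y)((X+Y+Z)² - 4YZ)`, the coefficient `c_n` of `XⁿYⁿZⁿ` in `P̃ⁿ`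
equals `C(2m,m)²` when `n = 2m`, `0` when `n` is odd; in particular these
coefficients coincide with those of `(X+Y)(XY+Z²)`. -/
theorem stmt9 (n : ℕ) (hn : 1 ≤ n) :
    (∀ m : ℕ, n = 2 * m →
      MvPolynomial.coeff (diagExp n)
        (((X 0 + X 1) * ((X 0 + X 1 + X 2) ^ 2 - 4 * X 1 * X 2) : MvPolynomial (Fin 3) ℤ) ^ n)
        = (Nat.choose (2 * m) m ^ 2 : ℕ)) ∧
    (Odd n →
      MvPolynomial.coeff (diagExp n)
        (((X 0 + X 1) * ((X 0 + X 1 + X 2) ^ 2 - 4 * X 1 * X 2) : MvPolynomial (Fin 3) ℤ) ^ n)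
        = 0) ∧
    MvPolynomial.coeff (diagExp n)
        (((X 0 + X 1) * ((X 0 + X 1 + X 2) ^ 2 - 4 * X 1 * X 2) : MvPolynomial (Fin 3) ℤ) ^ n)
      = MvPolynomial.coeff (diagExp n)
        (((X 0 + X 1) * (X 0 * X 1 + X 2 ^ 2) : MvPolynomial (Fin 3) ℤ) ^ n) := by
  have hBeven : ∀ m : ℕ, (Step9A.BB (2*m)).coeff (2*m) = ((Nat.choose (2*m) m ^ 2 : ℕ) : ℤ) := by
    intro m
    rw [Step9A.coeff_BB_even]
    unfold Step9A.cb
    rw [Nat.centralBinom_eq_two_mul_choose]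
    push_cast
    ring
  refine ⟨?_, ?_, ?_⟩
  · intro m hm
    subst hm
    rw [Step9B.main_chain, hBeven]
  · intro hodd
    rw [Step9B.main_chain, Step9A.coeff_BB_odd _ hodd]
  · rcases Nat.even_or_odd n with he | ho
    · have h2 := Nat.even_iff.mp he
      obtain ⟨m, rfl⟩ : ∃ m, n = 2*m := ⟨n/2, by omega⟩
      rw [Step9B.main_chain, hBeven, Step9B.coeff_P_even]
      push_cast
      ring
    · rw [Step9B.main_chain, Step9A.coeff_BB_odd _ ho, Step9B.coeff_P_odd _ ho]
end

section
/- The Apéry numbers u_m = Σ_{k=0}^{m} C(m,k)^2 · C(m+k,k) satisfy, for all m ≥ 1, the recurrence (m+1)^2 u_{m+1} - (11 m^2 + 11 m + 3) u_m - m^2 u_{m-1} = 0, and (1)^2 u_1 = 3 u_0; that is, they satisfy the recurrence (m+1)^2 u_{m+1} - (A m^2 + A m + λ) u_m + B m^2 u_{m-1} = 0 with (A, B, λ) = (11, -1, 3). -/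
/-!
Creative telescoping (Zeilberger). With `F n k = C(n,k)² C(n+k,k)`, the recurrence operator
applied to `F · k` equals `G n (k+1) - G n k` for an explicit certificate `G`, so summing over `k`
leaves only boundary values of `G`, which vanish. The termwise identity is checked by expressing
every shifted term through a single one, using the shift relations of `F` in `n` and in `k`;
these hold for all indices, including those where the binomial coefficients vanish.
-/

open Finset

section CastChoose

variable {R : Type*} [CommRing R]

theorem Nat.cast_choose_succ_right_mul (n k : ℕ) :
    (n.choose (k + 1) : R) * (k + 1) = n.choose k * ((n : R) - k) := by
  rcases le_or_gt k n with hk | hk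
  · have h := congrArg (Nat.cast : ℕ → R) (Nat.choose_succ_right_eq n k)
    push_cast [Nat.cast_sub hk] at h
    exact h
  · simp [Nat.choose_eq_zero_of_lt hk, Nat.choose_eq_zero_of_lt (hk.trans (Nat.lt_succ_self k))]

theorem Nat.cast_succ_choose_mul (n k : ℕ) :
    ((n + 1).choose k : R) * ((n : R) + 1 - k) = (n + 1) * n.choose k := by
  rcases le_or_gt k (n + 1) with hk | hk
  · have h := congrArg (Nat.cast : ℕ → R) (Nat.choose_mul_succ_eq n k)
    push_cast [Nat.cast_sub hk] at h
    rw [← h, mul_comm]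
  · simp [Nat.choose_eq_zero_of_lt hk, Nat.choose_eq_zero_of_lt (Nat.lt_of_succ_lt hk)]

end CastChoose

def aperyTerm (n k : ℕ) : ℚ := (n.choose k : ℚ) ^ 2 * (n + k).choose k

def apery (n : ℕ) : ℚ := ∑ k ∈ range (n + 1), aperyTerm n k

theorem aperyTerm_eq_zero_of_lt {n k : ℕ} (h : n < k) : aperyTerm n k = 0 := by
  simp [aperyTerm, Nat.choose_eq_zero_of_lt h]

theorem sum_range_aperyTerm_of_le {n N : ℕ} (h : n + 1 ≤ N) :
    ∑ k ∈ range N, aperyTerm n k = apery n :=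
  (sum_subset (range_subset_range.2 h) fun _ _ hk =>
    aperyTerm_eq_zero_of_lt (by simpa using hk)).symm

theorem aperyTerm_succ_right (n k : ℕ) :
    ((k : ℚ) + 1) ^ 3 * aperyTerm n (k + 1)
      = ((n : ℚ) - k) ^ 2 * (n + k + 1) * aperyTerm n k := by
  have hn := Nat.cast_choose_succ_right_mul (R := ℚ) n k
  have hnk : ((n + k + 1).choose (k + 1) : ℚ) * (k + 1) = (n + k + 1) * (n + k).choose k := by
    exact_mod_cast (Nat.add_one_mul_choose_eq (n + k) k).symm
  calc ((k : ℚ) + 1) ^ 3 * aperyTerm n (k + 1)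
      = ((n.choose (k + 1) : ℚ) * (k + 1)) ^ 2
          * (((n + k + 1).choose (k + 1) : ℚ) * (k + 1)) := by
        rw [aperyTerm, ← add_assoc]
        ring
    _ = ((n : ℚ) - k) ^ 2 * (n + k + 1) * aperyTerm n k := by
        rw [hn, hnk, aperyTerm]
        ring

theorem aperyTerm_succ_left (n k : ℕ) :
    ((n : ℚ) + 1 - k) ^ 2 * aperyTerm (n + 1) k = (n + 1) * (n + k + 1) * aperyTerm n k := by
  have hn := Nat.cast_succ_choose_mul (R := ℚ) n k
  have hnk := Nat.cast_succ_choose_mul (R := ℚ) (n + k) k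
  push_cast at hnk
  refine mul_left_cancel₀ (Nat.cast_add_one_ne_zero n) ?_
  rw [aperyTerm, aperyTerm, show n + 1 + k = n + k + 1 by omega]
  linear_combination ((n : ℚ) + 1) * ((n + k + 1).choose k : ℚ)
      * ((n + 1).choose k * ((n : ℚ) + 1 - k) + (n + 1) * n.choose k) * hn
    + ((n : ℚ) + 1) ^ 2 * (n.choose k : ℚ) ^ 2 * hnk

/-- Zeilberger's certificate for the Apéry numbers. -/
def aperyCert (n : ℕ) : ℕ → ℚ
  | 0 => 0
  | k + 1 =>
    (((k : ℚ) + 1) ^ 2 + (k + 1) + 6 * n * (k + 1) - 11 * n ^ 2 - 15 * n - 4) * aperyTerm n k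

theorem aperyTerm_recurrence_eq_cert_sub (m k : ℕ) :
    ((m : ℚ) + 2) ^ 2 * aperyTerm (m + 2) k
      - (11 * ((m : ℚ) + 1) ^ 2 + 11 * ((m : ℚ) + 1) + 3) * aperyTerm (m + 1) k
      - ((m : ℚ) + 1) ^ 2 * aperyTerm m k
      = aperyCert (m + 1) (k + 1) - aperyCert (m + 1) k := by
  rcases k with _ | j
  · simp [aperyTerm, aperyCert]
    ring
  · -- After multiplying by `(m+1)(j+1)³`, the shift relations turn every term into a polynomial
    -- multiple of `aperyTerm (m + 1) j`.
    have s0 := aperyTerm_succ_right m j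
    have s1 := aperyTerm_succ_right (m + 1) j
    have s2 := aperyTerm_succ_right (m + 2) j
    have l0 := aperyTerm_succ_left m j
    have l1 := aperyTerm_succ_left (m + 1) j
    push_cast at s1 s2 l1
    refine mul_left_cancel₀
      (mul_ne_zero (Nat.cast_add_one_ne_zero m) (pow_ne_zero 3 (Nat.cast_add_one_ne_zero j))) ?_
    simp only [aperyCert]
    push_cast
    linear_combination ((m : ℚ) + 1) * ((m : ℚ) + 2) ^ 2 * s2
      + ((m : ℚ) + 1) * ((m : ℚ) + 2) ^ 2 * ((m : ℚ) + j + 3) * l1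
      - ((m : ℚ) + 1) * (11 * ((m : ℚ) + 1) ^ 2 + 11 * ((m : ℚ) + 1) + 3
        + (((j : ℚ) + 2) ^ 2 + (j + 2) + 6 * (m + 1) * (j + 2) - 11 * (m + 1) ^ 2
          - 15 * (m + 1) - 4)) * s1
      - ((m : ℚ) + 1) ^ 3 * s0 + ((m : ℚ) + 1) ^ 2 * ((m : ℚ) - j) ^ 2 * l0

theorem apery_recurrence (m : ℕ) :
    ((m : ℚ) + 2) ^ 2 * apery (m + 2)
      - (11 * ((m : ℚ) + 1) ^ 2 + 11 * ((m : ℚ) + 1) + 3) * apery (m + 1)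
      - ((m : ℚ) + 1) ^ 2 * apery m = 0 := by
  have h := sum_range_sub (aperyCert (m + 1)) (m + 3)
  rw [← sum_congr rfl fun k _ => aperyTerm_recurrence_eq_cert_sub m k, sum_sub_distrib,
    sum_sub_distrib, ← mul_sum, ← mul_sum, ← mul_sum, sum_range_aperyTerm_of_le le_rfl,
    sum_range_aperyTerm_of_le (by omega), sum_range_aperyTerm_of_le (by omega)] at h
  simpa [aperyCert, aperyTerm_eq_zero_of_lt (Nat.lt_succ_self (m + 1))] using h

/-- The Apéry numbers `u_m = Σ_{k=0}^m C(m,k)² C(m+k,k)` satisfy the Zagier-type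
recurrence with `(A,B,λ) = (11,-1,3)`:
`(m+1)² u_{m+1} - (11m² + 11m + 3) u_m - m² u_{m-1} = 0` for `m ≥ 1`, and `u_1 = 3 u_0`. -/
theorem stmt14 (u : ℕ → ℚ)
    (hu : ∀ m : ℕ, u m = ∑ k ∈ Finset.range (m + 1),
      (Nat.choose m k : ℚ) ^ 2 * (Nat.choose (m + k) k : ℚ)) :
    (∀ m : ℕ, 1 ≤ m → ((m : ℚ) + 1) ^ 2 * u (m + 1)
      - (11 * (m : ℚ) ^ 2 + 11 * m + 3) * u m - (m : ℚ) ^ 2 * u (m - 1) = 0) ∧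
    (1 : ℚ) ^ 2 * u 1 = 3 * u 0 := by
  obtain rfl : u = apery := funext hu
  refine ⟨fun n hn => ?_, by norm_num [apery, aperyTerm, sum_range_succ]⟩
  obtain ⟨m, rfl⟩ : ∃ m, n = m + 1 := ⟨n - 1, by omega⟩
  rw [Nat.add_sub_cancel]
  push_cast
  linear_combination apery_recurrence m
end
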